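/- arXiv:1512.07091 — 9 statements merged into one kernel-verified Lean document; each statement's English description precedes it below -/
import Mathlib

section
/- Let A and L be symmetric positive definite n×n real matrices, let P be an n×m real matrix with full column rank, set A_c := PᵀAP and T := P·A_c⁻¹·Pᵀ·A, and let C_A > 0. Then the matrix (I−T)·A⁻¹ is symmetric, and the following two statements are equivalent: (i) ((I−T)u)ᵀ·L·((I−T)u) ≤ C_A·uᵀ·A·u for all u ∈ ℝⁿ; (ii) (I−T)·A⁻¹ ≼ C_A·L⁻¹. -/
/-!
`T` is the `A`-orthogonal projection onto the range of `P`, so `E := I - T` is idempotent and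
`E A⁻¹ = A⁻¹ - P A_c⁻¹ Pᵀ` is symmetric; hence `E A⁻¹ Eᵀ = E A⁻¹`. Condition (i) says
`Eᵀ L E ≼ C_A A`, and for SPD `B`, `L` and `c > 0` the inequalities `Xᵀ L X ≼ c B` and
`X B⁻¹ Xᵀ ≼ c L⁻¹` are equivalent: both are Schur complement conditions for the block matrix
`[[L⁻¹, X], [Xᵀ, c B]]`. With `X = E` and `B = A` this is (ii).
-/

open Matrix
/-- The `Q`-norm of a vector: `‖v‖_Q := √(vᵀ Q v)`. -/
noncomputable def matNorm {n : ℕ} (Q : Matrix (Fin n) (Fin n) ℝ) (v : Fin n → ℝ) : ℝ :=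
  Real.sqrt (v ⬝ᵥ Q *ᵥ v)

namespace Matrix

section Projection

variable {n m α : Type*} [Fintype n] [Fintype m] [DecidableEq n] [DecidableEq m] [CommRing α]

noncomputable def galerkinProjection (A : Matrix n n α) (P : Matrix n m α) : Matrix n n α :=
  P * (Pᵀ * A * P)⁻¹ * (Pᵀ * A)

/-- Holds also for singular `M`, where `M⁻¹ = 0`. -/
lemma nonsing_inv_mul_mul_nonsing_inv (M : Matrix m m α) : M⁻¹ * M * M⁻¹ = M⁻¹ := by
  by_cases h : IsUnit M.det
  · rw [nonsing_inv_mul M h, Matrix.one_mul]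
  · rw [nonsing_inv_apply_not_isUnit M h, Matrix.zero_mul, Matrix.zero_mul]

omit [DecidableEq n] in
lemma isIdempotentElem_galerkinProjection (A : Matrix n n α) (P : Matrix n m α) :
    IsIdempotentElem (galerkinProjection A P) := by
  unfold galerkinProjection IsIdempotentElem
  calc P * (Pᵀ * A * P)⁻¹ * (Pᵀ * A) * (P * (Pᵀ * A * P)⁻¹ * (Pᵀ * A))
      = P * ((Pᵀ * A * P)⁻¹ * (Pᵀ * A * P) * (Pᵀ * A * P)⁻¹) * (Pᵀ * A) := by
        simp only [Matrix.mul_assoc]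
    _ = P * (Pᵀ * A * P)⁻¹ * (Pᵀ * A) := by rw [nonsing_inv_mul_mul_nonsing_inv]

lemma one_sub_galerkinProjection_mul_inv {A : Matrix n n α} (hA : IsUnit A.det)
    (P : Matrix n m α) :
    (1 - galerkinProjection A P) * A⁻¹ = A⁻¹ - P * (Pᵀ * A * P)⁻¹ * Pᵀ := by
  calc (1 - galerkinProjection A P) * A⁻¹
      = A⁻¹ - P * (Pᵀ * A * P)⁻¹ * Pᵀ * (A * A⁻¹) := by
        simp only [galerkinProjection, Matrix.sub_mul, Matrix.one_mul, Matrix.mul_assoc]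
    _ = A⁻¹ - P * (Pᵀ * A * P)⁻¹ * Pᵀ := by rw [mul_nonsing_inv A hA, Matrix.mul_one]

lemma isSymm_one_sub_galerkinProjection_mul_inv {A : Matrix n n α} (hA : A.IsSymm)
    (hdet : IsUnit A.det) (P : Matrix n m α) :
    ((1 - galerkinProjection A P) * A⁻¹).IsSymm := by
  have hAc : (Pᵀ * A * P).IsSymm := by
    rw [IsSymm, transpose_mul, transpose_mul, transpose_transpose, hA.eq, Matrix.mul_assoc]
  rw [one_sub_galerkinProjection_mul_inv hdet P]
  refine hA.inv.sub ?_
  rw [IsSymm, transpose_mul, transpose_mul, transpose_transpose, hAc.inv.eq,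
    ← Matrix.mul_assoc P]

lemma one_sub_galerkinProjection_mul_inv_mul_transpose {A : Matrix n n α} (hA : A.IsSymm)
    (hdet : IsUnit A.det) (P : Matrix n m α) :
    (1 - galerkinProjection A P) * A⁻¹ * (1 - galerkinProjection A P)ᵀ =
      (1 - galerkinProjection A P) * A⁻¹ := by
  set E := 1 - galerkinProjection A P
  have hE : E * E = E := (isIdempotentElem_galerkinProjection A P).one_sub
  have hsymm : A⁻¹ * Eᵀ = E * A⁻¹ := by
    rw [← (isSymm_one_sub_galerkinProjection_mul_inv hA hdet P).eq, transpose_mul, hA.inv.eq]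
  rw [Matrix.mul_assoc, hsymm, ← Matrix.mul_assoc, hE]

end Projection

section Loewner

variable {ι κ : Type*} [Fintype ι] [Fintype κ]

lemma dotProduct_transpose_mul_mul_mulVec (L : Matrix ι ι ℝ) (X : Matrix ι κ ℝ) (u : κ → ℝ) :
    u ⬝ᵥ (Xᵀ * L * X) *ᵥ u = (X *ᵥ u) ⬝ᵥ L *ᵥ (X *ᵥ u) := by
  rw [← mulVec_mulVec, ← mulVec_mulVec, dotProduct_transpose_mulVec, dotProduct_comm]

lemma posSemidef_smul_sub_transpose_mul_mul_iff_forall {B : Matrix κ κ ℝ} {L : Matrix ι ι ℝ}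
    (hB : B.IsHermitian) (hL : L.IsHermitian) (X : Matrix ι κ ℝ) (c : ℝ) :
    (c • B - Xᵀ * L * X).PosSemidef ↔
      ∀ u, (X *ᵥ u) ⬝ᵥ L *ᵥ (X *ᵥ u) ≤ c * (u ⬝ᵥ B *ᵥ u) := by
  have hHerm : (c • B - Xᵀ * L * X).IsHermitian := by
    simpa only [conjTranspose_eq_transpose_of_trivial] using
      (hB.smul (IsSelfAdjoint.all c)).sub (isHermitian_conjTranspose_mul_mul X hL)
  simp only [posSemidef_iff_dotProduct_mulVec, hHerm, true_and, star_trivial, sub_mulVec,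
    dotProduct_sub, smul_mulVec, dotProduct_smul, smul_eq_mul,
    dotProduct_transpose_mul_mul_mulVec, sub_nonneg]

omit [Fintype ι] in
lemma posSemidef_smul_iff {M : Matrix ι ι ℝ} {c : ℝ} (hc : 0 < c) :
    (c • M).PosSemidef ↔ M.PosSemidef := by
  refine ⟨fun h => ?_, fun h => h.smul hc.le⟩
  simpa [smul_smul, inv_mul_cancel₀ hc.ne'] using h.smul (inv_nonneg.mpr hc.le)

variable [DecidableEq ι] [DecidableEq κ]

/-- Both sides are Schur complement conditions for the block matrix `[[L⁻¹, X], [Xᵀ, c • B]]`. -/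
theorem posSemidef_smul_sub_transpose_mul_mul_iff {B : Matrix κ κ ℝ} {L : Matrix ι ι ℝ}
    (hB : B.PosDef) (hL : L.PosDef) (X : Matrix ι κ ℝ) {c : ℝ} (hc : 0 < c) :
    (c • B - Xᵀ * L * X).PosSemidef ↔ (c • L⁻¹ - X * B⁻¹ * Xᵀ).PosSemidef := by
  have hcB : (c • B).PosDef := hB.smul hc
  let := hL.inv.isUnit.invertible
  let := hcB.isUnit.invertible
  have h₁₁ := PosDef.fromBlocks₁₁ X (c • B) hL.inv
  have h₂₂ := PosDef.fromBlocks₂₂ L⁻¹ X hcB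
  rw [conjTranspose_eq_transpose_of_trivial] at h₁₁ h₂₂
  rw [nonsing_inv_nonsing_inv L ((isUnit_iff_isUnit_det L).mp hL.isUnit)] at h₁₁
  have hinv : (c • B)⁻¹ = c⁻¹ • B⁻¹ := by
    let := invertibleOfNonzero hc.ne'
    rw [inv_smul B c ((isUnit_iff_isUnit_det B).mp hB.isUnit), invOf_eq_inv]
  have hschur : L⁻¹ - X * (c • B)⁻¹ * Xᵀ = c⁻¹ • (c • L⁻¹ - X * B⁻¹ * Xᵀ) := by
    rw [hinv, smul_sub, smul_smul, inv_mul_cancel₀ hc.ne', one_smul, Matrix.mul_smul,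
      Matrix.smul_mul]
  rw [← h₁₁, h₂₂, hschur, posSemidef_smul_iff (inv_pos.mpr hc)]

end Loewner

end Matrix

theorem stmt0_general {n m : ℕ} (A L : Matrix (Fin n) (Fin n) ℝ)
    (hA : A.PosDef) (hL : L.PosDef)
    (P : Matrix (Fin n) (Fin m) ℝ)
    (C_A : ℝ) (hCA : 0 < C_A)
    (T : Matrix (Fin n) (Fin n) ℝ) (hT : T = P * (Pᵀ * A * P)⁻¹ * (Pᵀ * A)) :
    ((1 - T) * A⁻¹).IsSymm ∧
    ((∀ u : Fin n → ℝ,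
        ((1 - T) *ᵥ u) ⬝ᵥ L *ᵥ ((1 - T) *ᵥ u) ≤ C_A * (u ⬝ᵥ A *ᵥ u))
      ↔ (C_A • L⁻¹ - (1 - T) * A⁻¹).PosSemidef) := by
  obtain rfl : T = galerkinProjection A P := hT
  have hAsymm : A.IsSymm := isHermitian_iff_isSymm.mp hA.1
  have hAdet : IsUnit A.det := (isUnit_iff_isUnit_det A).mp hA.isUnit
  refine ⟨isSymm_one_sub_galerkinProjection_mul_inv hAsymm hAdet P, ?_⟩
  rw [← posSemidef_smul_sub_transpose_mul_mul_iff_forall hA.1 hL.1,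
    posSemidef_smul_sub_transpose_mul_mul_iff hA hL _ hCA,
    one_sub_galerkinProjection_mul_inv_mul_transpose hAsymm hAdet]

/-- With `A`, `L` SPD, `P` of full column rank, `A_c = PᵀAP`,
`T = P A_c⁻¹ Pᵀ A`, and `C_A > 0`, the matrix `(I−T) A⁻¹` is symmetric, and
`‖(I−T)u‖_L² ≤ C_A ‖u‖_A²` for all `u` is equivalent to `(I−T) A⁻¹ ≼ C_A L⁻¹`. -/
theorem stmt0 {n m : ℕ} (A L : Matrix (Fin n) (Fin n) ℝ)
    (hA : A.PosDef) (hL : L.PosDef)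
    (P : Matrix (Fin n) (Fin m) ℝ) (hP : P.rank = m)
    (C_A : ℝ) (hCA : 0 < C_A)
    (T : Matrix (Fin n) (Fin n) ℝ) (hT : T = P * (Pᵀ * A * P)⁻¹ * (Pᵀ * A)) :
    ((1 - T) * A⁻¹).IsSymm ∧
    ((∀ u : Fin n → ℝ,
        ((1 - T) *ᵥ u) ⬝ᵥ L *ᵥ ((1 - T) *ᵥ u) ≤ C_A * (u ⬝ᵥ A *ᵥ u))
      ↔ (C_A • L⁻¹ - (1 - T) * A⁻¹).PosSemidef) :=
  stmt0_general A L hA hL P C_A hCA T hT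
end

section
/- Let A and L be SPD n×n matrices and C_I > 0 a constant with uᵀ·A·u ≤ C_I·uᵀ·L·u for all u ∈ ℝⁿ. Let τ ∈ (0, 1/C_I], let ν ≥ 1 be an integer, and set S := I − τ·L⁻¹·A. Then: (a) the matrix A·Sᵛ is symmetric and 0 ≤ uᵀ·A·Sᵛ·u ≤ (τ·ν)⁻¹·uᵀ·L·u for all u ∈ ℝⁿ (smoothing property); and (b) ‖S·u‖_A ≤ ‖u‖_A for all u ∈ ℝⁿ. -/
/-!
With `R = √L` and `X = R⁻¹ A R⁻¹`, the hypotheses say `0 ≤ X ≤ τ⁻¹` in the Loewner order, and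
`S = R⁻¹ (1 - τ X) R`. Hence `A Sᵛ = R · X (1 - τ X)ᵛ · R` and `Sᵀ A S = R · (1 - τ X) X (1 - τ X) · R`,
so by the continuous functional calculus every claim reduces to a scalar inequality on the
spectrum `[0, τ⁻¹]` of `X`: `x (1 - τ x)ᵛ ≤ (τ ν)⁻¹` and `(1 - τ x)² x ≤ x`.
-/

open Matrix

theorem mul_one_sub_mul_pow_le_inv {τ x : ℝ} (hτ : 0 < τ) (hx : 0 ≤ x) (hτx : τ * x ≤ 1)
    {ν : ℕ} (hν : ν ≠ 0) : x * (1 - τ * x) ^ ν ≤ (τ * ν)⁻¹ := by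
  rw [← mul_one (τ * ν)⁻¹, le_inv_mul_iff₀ (by positivity)]
  have ht : 0 ≤ τ * x := mul_nonneg hτ.le hx
  calc τ * ν * (x * (1 - τ * x) ^ ν) = ν * (τ * x) * (1 - τ * x) ^ ν := by ring
    _ ≤ (1 + τ * x) ^ ν * (1 - τ * x) ^ ν := by
      gcongr
      linarith [one_add_mul_le_pow (by linarith : -2 ≤ τ * x) ν]
    _ = (1 - (τ * x) ^ 2) ^ ν := by rw [← mul_pow]; ring
    _ ≤ 1 := pow_le_one₀ (by nlinarith) (by nlinarith)

theorem IsSelfAdjoint.units_val_inv {𝒜 : Type*} [Monoid 𝒜] [StarMul 𝒜] {u : 𝒜ˣ}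
    (hu : IsSelfAdjoint (u : 𝒜)) : IsSelfAdjoint (↑u⁻¹ : 𝒜) := by
  rw [IsSelfAdjoint, ← Units.coe_star_inv]
  exact congrArg (fun v : 𝒜ˣ => (↑v⁻¹ : 𝒜)) (Units.ext hu.star_eq)

section Conjugation

variable {𝒜 : Type*} [Ring 𝒜]

theorem one_sub_smul_ringInverse_mul_conj [Algebra ℝ 𝒜] (R : 𝒜ˣ) (X : 𝒜) (τ : ℝ) :
    1 - τ • (Ring.inverse ((R : 𝒜) * R) * (R * X * R)) = ↑R⁻¹ * (1 - τ • X) * R := by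
  rw [← Units.val_mul, Ring.inverse_unit, _root_.mul_inv_rev]
  simp [mul_sub, sub_mul, mul_assoc]

theorem conj_mul_conj_pow (R : 𝒜ˣ) (X Y : 𝒜) (ν : ℕ) :
    ↑R * X * ↑R * (↑R⁻¹ * Y * ↑R) ^ ν = ↑R * (X * Y ^ ν) * ↑R := by
  rw [Units.conj_pow']
  simp [mul_assoc]

theorem star_conj_mul_conj [StarRing 𝒜] {R : 𝒜ˣ} (hR : IsSelfAdjoint (R : 𝒜)) (X Y : 𝒜) :
    star (↑R⁻¹ * Y * ↑R) * (↑R * X * ↑R) * (↑R⁻¹ * Y * ↑R) = ↑R * (star Y * X * Y) * ↑R := by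
  simp [star_mul, hR.star_eq, hR.units_val_inv.star_eq, mul_assoc]

end Conjugation

section FunctionalCalculus

variable {𝒜 : Type*} [Ring 𝒜] [StarRing 𝒜] [Algebra ℝ 𝒜] [TopologicalSpace 𝒜]
  [ContinuousFunctionalCalculus ℝ 𝒜 IsSelfAdjoint]

theorem mul_one_sub_smul_pow_eq_cfc {X : 𝒜} (hX : IsSelfAdjoint X) (τ : ℝ) (ν : ℕ) :
    X * (1 - τ • X) ^ ν = cfc (fun x => x * (1 - τ * x) ^ ν) X := by
  rw [cfc_mul .., cfc_pow .., cfc_sub .., cfc_const_one .., cfc_const_mul .., cfc_id' ..]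

variable [PartialOrder 𝒜] [StarOrderedRing 𝒜] [NonnegSpectrumClass ℝ 𝒜] {X : 𝒜} {τ : ℝ}

theorem nonneg_and_mul_le_one_of_mem_spectrum (hX0 : 0 ≤ X) (hX1 : X ≤ algebraMap ℝ 𝒜 τ⁻¹)
    (hτ : 0 < τ) {x : ℝ} (hx : x ∈ spectrum ℝ X) : 0 ≤ x ∧ τ * x ≤ 1 := by
  refine ⟨spectrum_nonneg_of_nonneg hX0 hx, ?_⟩
  have := (le_algebraMap_iff_spectrum_le (IsSelfAdjoint.of_nonneg hX0)).mp hX1 x hx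
  rwa [← mul_one τ⁻¹, le_inv_mul_iff₀ hτ] at this

theorem mul_one_sub_smul_pow_nonneg (hX0 : 0 ≤ X) (hX1 : X ≤ algebraMap ℝ 𝒜 τ⁻¹) (hτ : 0 < τ)
    (ν : ℕ) : 0 ≤ X * (1 - τ • X) ^ ν := by
  rw [mul_one_sub_smul_pow_eq_cfc (.of_nonneg hX0)]
  refine cfc_nonneg fun x hx => ?_
  obtain ⟨hx0, hx1⟩ := nonneg_and_mul_le_one_of_mem_spectrum hX0 hX1 hτ hx
  exact mul_nonneg hx0 (pow_nonneg (sub_nonneg.2 hx1) ν)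

theorem mul_one_sub_smul_pow_le_algebraMap (hX0 : 0 ≤ X) (hX1 : X ≤ algebraMap ℝ 𝒜 τ⁻¹)
    (hτ : 0 < τ) {ν : ℕ} (hν : ν ≠ 0) : X * (1 - τ • X) ^ ν ≤ algebraMap ℝ 𝒜 (τ * ν)⁻¹ := by
  rw [mul_one_sub_smul_pow_eq_cfc (.of_nonneg hX0)]
  refine cfc_le_algebraMap _ _ _ fun x hx => ?_
  obtain ⟨hx0, hx1⟩ := nonneg_and_mul_le_one_of_mem_spectrum hX0 hX1 hτ hx
  exact mul_one_sub_mul_pow_le_inv hτ hx0 hx1 hν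

theorem one_sub_smul_mul_mul_one_sub_smul_le (hX0 : 0 ≤ X) (hX1 : X ≤ algebraMap ℝ 𝒜 τ⁻¹)
    (hτ : 0 < τ) : (1 - τ • X) * X * (1 - τ • X) ≤ X := by
  have hX : IsSelfAdjoint X := .of_nonneg hX0
  calc (1 - τ • X) * X * (1 - τ • X) = cfc (fun x => (1 - τ * x) * x * (1 - τ * x)) X := by
        rw [cfc_mul .., cfc_mul .., cfc_sub .., cfc_const_one .., cfc_const_mul .., cfc_id' ..]
    _ ≤ cfc (fun x => x) X := cfc_mono fun x hx => by
        obtain ⟨hx0, hx1⟩ := nonneg_and_mul_le_one_of_mem_spectrum hX0 hX1 hτ hx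
        nlinarith [mul_nonneg hτ.le hx0, mul_nonneg (mul_nonneg hτ.le hx0) hx0]
    _ = X := cfc_id' ℝ X

variable [StarModule ℝ 𝒜] [IsSemitopologicalRing 𝒜] [T2Space 𝒜]

theorem richardson_smoothing {A L S : 𝒜} (hL : IsStrictlyPositive L) (hA : 0 ≤ A)
    (hτ : 0 < τ) (hAL : A ≤ τ⁻¹ • L) (hS : S = 1 - τ • (Ring.inverse L * A)) {ν : ℕ}
    (hν : ν ≠ 0) :
    0 ≤ A * S ^ ν ∧ A * S ^ ν ≤ (τ * ν)⁻¹ • L ∧ star S * A * S ≤ A := by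
  obtain ⟨R, hRL⟩ : ∃ R : 𝒜ˣ, (R : 𝒜) = CFC.sqrt L := ⟨hL.sqrt.isUnit.unit, rfl⟩
  have hR : IsSelfAdjoint (R : 𝒜) := hRL ▸ hL.sqrt.isSelfAdjoint
  have hLR : L = R * R := by rw [hRL, CFC.sqrt_mul_sqrt_self L hL.nonneg]
  set X := (↑R⁻¹ : 𝒜) * A * ↑R⁻¹
  have hAX : A = R * X * R := by simp [X, mul_assoc]
  have hSX : S = ↑R⁻¹ * (1 - τ • X) * R := by
    rw [hS, hLR, hAX, one_sub_smul_ringInverse_mul_conj]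
  have hX0 : 0 ≤ X := hR.units_val_inv.conjugate_nonneg hA
  have hX1 : X ≤ algebraMap ℝ 𝒜 τ⁻¹ :=
    calc X ≤ ↑R⁻¹ * (τ⁻¹ • L) * ↑R⁻¹ := hR.units_val_inv.conjugate_le_conjugate hAL
      _ = algebraMap ℝ 𝒜 τ⁻¹ := by simp [hLR, Algebra.algebraMap_eq_smul_one]
  have hRcR (c : ℝ) : (R : 𝒜) * algebraMap ℝ 𝒜 c * R = c • L := by
    simp [hLR, Algebra.algebraMap_eq_smul_one]
  have hY : IsSelfAdjoint (1 - τ • X) :=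
    (IsSelfAdjoint.one 𝒜).sub ((IsSelfAdjoint.all τ).smul hX0.isSelfAdjoint)
  rw [hSX, hAX, conj_mul_conj_pow, star_conj_mul_conj hR, hY.star_eq, ← hRcR]
  exact ⟨hR.conjugate_nonneg (mul_one_sub_smul_pow_nonneg hX0 hX1 hτ ν),
    hR.conjugate_le_conjugate (mul_one_sub_smul_pow_le_algebraMap hX0 hX1 hτ hν),
    hR.conjugate_le_conjugate (one_sub_smul_mul_mul_one_sub_smul_le hX0 hX1 hτ)⟩

end FunctionalCalculus

open scoped MatrixOrder

namespace Matrix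

variable {m : Type*} [Fintype m]

theorem dotProduct_mulVec_le_of_le {A B : Matrix m m ℝ} (h : A ≤ B) (u : m → ℝ) :
    u ⬝ᵥ A *ᵥ u ≤ u ⬝ᵥ B *ᵥ u := by
  simpa [sub_mulVec, dotProduct_sub] using (le_iff.1 h).dotProduct_mulVec_nonneg u

theorem le_of_forall_dotProduct_mulVec_le {A B : Matrix m m ℝ} (hA : A.IsHermitian)
    (hB : B.IsHermitian) (h : ∀ u, u ⬝ᵥ A *ᵥ u ≤ u ⬝ᵥ B *ᵥ u) : A ≤ B :=
  PosSemidef.of_dotProduct_mulVec_nonneg (hB.sub hA) fun u => by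
    simpa [sub_mulVec, dotProduct_sub] using h u

theorem dotProduct_mulVec_star_mul_mul (S A : Matrix m m ℝ) (u : m → ℝ) :
    u ⬝ᵥ (star S * A * S) *ᵥ u = (S *ᵥ u) ⬝ᵥ A *ᵥ (S *ᵥ u) := by
  rw [star_eq_conjTranspose, conjTranspose_eq_transpose_of_trivial, ← mulVec_mulVec,
    ← mulVec_mulVec, dotProduct_mulVec, vecMul_transpose]

end Matrix

/-- smoothing property of the damped preconditioned Richardson smoother
`S = I − τ L⁻¹ A`: `A Sᵛ` is symmetric, `0 ≤ uᵀ A Sᵛ u ≤ (τν)⁻¹ uᵀ L u`, and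
`‖S u‖_A ≤ ‖u‖_A`. -/
theorem stmt1 {n : ℕ} (A L : Matrix (Fin n) (Fin n) ℝ)
    (hA : A.PosDef) (hL : L.PosDef)
    (C_I : ℝ) (hCI : 0 < C_I)
    (hinv : ∀ u : Fin n → ℝ, u ⬝ᵥ A *ᵥ u ≤ C_I * (u ⬝ᵥ L *ᵥ u))
    (τ : ℝ) (hτ0 : 0 < τ) (hτ1 : τ ≤ 1 / C_I)
    (ν : ℕ) (hν : 1 ≤ ν)
    (S : Matrix (Fin n) (Fin n) ℝ) (hS : S = 1 - τ • (L⁻¹ * A)) :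
    (A * S ^ ν).IsSymm ∧
    (∀ u : Fin n → ℝ,
        0 ≤ u ⬝ᵥ (A * S ^ ν) *ᵥ u ∧
        u ⬝ᵥ (A * S ^ ν) *ᵥ u ≤ (τ * (ν : ℝ))⁻¹ * (u ⬝ᵥ L *ᵥ u)) ∧
    (∀ u : Fin n → ℝ, matNorm A (S *ᵥ u) ≤ matNorm A u) := by
  have hCτ : C_I ≤ τ⁻¹ := by rwa [le_one_div hτ0 hCI, ← inv_eq_one_div] at hτ1
  have hAL : A ≤ τ⁻¹ • L := by
    refine le_of_forall_dotProduct_mulVec_le hA.isHermitian (hL.isHermitian.smul (.all _))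
      fun u => ?_
    rw [smul_mulVec, dotProduct_smul, smul_eq_mul]
    exact (hinv u).trans
      (mul_le_mul_of_nonneg_right hCτ (hL.posSemidef.dotProduct_mulVec_nonneg u))
  obtain ⟨h0, h1, h2⟩ := richardson_smoothing (isStrictlyPositive_iff_posDef.2 hL)
    hA.posSemidef.nonneg hτ0 hAL (hS.trans (by rw [nonsing_inv_eq_ringInverse]))
    (by omega : ν ≠ 0)
  refine ⟨isHermitian_iff_isSymm.1 h0.posSemidef.isHermitian, fun u => ⟨?_, ?_⟩, fun u => ?_⟩
  · simpa using dotProduct_mulVec_le_of_le h0 u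
  · simpa [smul_mulVec, dotProduct_smul] using dotProduct_mulVec_le_of_le h1 u
  · rw [matNorm, matNorm, ← dotProduct_mulVec_star_mul_mul]
    exact Real.sqrt_le_sqrt (dotProduct_mulVec_le_of_le h2 u)
end

section
/- Let A and L be SPD n×n matrices, let P be an n×m matrix with full column rank, set A_c := PᵀAP and T := P·A_c⁻¹·Pᵀ·A. Assume there are constants C_I, C_A > 0 such that uᵀ·A·u ≤ C_I·uᵀ·L·u and ((I−T)u)ᵀ·L·((I−T)u) ≤ C_A·uᵀ·A·u for all u ∈ ℝⁿ. Let τ ∈ (0, 1/C_I], let ν ≥ 1 be an integer, and set S := I − τ·L⁻¹·A. Then the two-grid iteration matrix satisfies ‖(I−T)·Sᵛ·u‖_L ≤ (C_A/(τ·ν))·‖u‖_L for all u ∈ ℝⁿ; in particular, for ν > C_A/τ the two-grid method converges q-linearly in ‖·‖_L with rate q = C_A/(τ·ν) < 1. -/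
/-!
Put `Q = 1 - T` and `w = Q Sᵛ u`. Since `Q` is idempotent and self-adjoint for `⟪·,·⟫_A`,
the approximation property applied to `w = Q w` gives `‖w‖_L² ≤ C_A ⟪A Sᵛ u, w⟫`.
Conjugating by `X = L^{1/2}` turns `S` into `1 - N` with `N = τ X⁻¹ A X⁻¹`, and the inverse
inequality says `0 ≤ N ≤ 1`. Hence
`τ ⟪A Sᵛ u, w⟫ = ⟪N (1 - N)ᵛ X u, X w⟫ ≤ ‖N (1 - N)ᵛ‖ ‖u‖_L ‖w‖_L`, and by the functional
calculus `‖N (1 - N)ᵛ‖ ≤ max_{x ∈ [0, 1]} x (1 - x)ᵛ ≤ 1 / ν`.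
-/

open Matrix

open scoped Matrix.Norms.L2Operator MatrixOrder

lemma mul_one_sub_pow_le_inv {x : ℝ} (hx0 : 0 ≤ x) (hx1 : x ≤ 1) {ν : ℕ} (hν : ν ≠ 0) :
    x * (1 - x) ^ ν ≤ 1 / ν := by
  rw [le_div_iff₀ (by positivity)]
  have hexp : (1 - x) ^ ν ≤ Real.exp (-(ν * x)) := by
    rw [show -(ν * x) = ν * (-x) by ring, Real.exp_nat_mul]
    exact pow_le_pow_left₀ (by linarith) (by linarith [Real.add_one_le_exp (-x)]) ν
  calc x * (1 - x) ^ ν * ν = ν * x * (1 - x) ^ ν := by ring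
    _ ≤ ν * x * Real.exp (-(ν * x)) := by gcongr
    _ ≤ Real.exp (-1) := Real.mul_exp_neg_le_exp_neg_one _
    _ ≤ 1 := by rw [Real.exp_le_one_iff]; norm_num

lemma norm_mul_one_sub_pow_le {A : Type*} [NormedRing A] [StarRing A] [NormedAlgebra ℝ A]
    [PartialOrder A] [StarOrderedRing A] [IsometricContinuousFunctionalCalculus ℝ A IsSelfAdjoint]
    [NonnegSpectrumClass ℝ A] {a : A} (h0 : 0 ≤ a) (h1 : a ≤ 1) {ν : ℕ} (hν : ν ≠ 0) :
    ‖a * (1 - a) ^ ν‖ ≤ 1 / ν := by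
  have hcfc : cfc (fun x : ℝ => x * (1 - x) ^ ν) a = a * (1 - a) ^ ν := by
    rw [cfc_mul _ _ a, cfc_pow _ _ a, cfc_sub _ _ a, cfc_const_one ℝ a, cfc_id' ℝ a]
  rw [← hcfc]
  refine norm_cfc_le (by positivity) fun x hx => ?_
  have hx0 : 0 ≤ x := spectrum_nonneg_of_nonneg h0 hx
  have hx1 : x ≤ 1 := (CFC.le_one_iff a).mp h1 x hx
  rw [Real.norm_of_nonneg (mul_nonneg hx0 (pow_nonneg (sub_nonneg.mpr hx1) ν))]
  exact mul_one_sub_pow_le_inv hx0 hx1 hν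

lemma dotProduct_mulVec_le_l2_opNorm {m n : Type*} [Fintype m] [Fintype n] [DecidableEq n]
    (M : Matrix m n ℝ) (x : n → ℝ) (y : m → ℝ) :
    (M *ᵥ x) ⬝ᵥ y ≤ ‖M‖ * ‖WithLp.toLp 2 x‖ * ‖WithLp.toLp 2 y‖ :=
  calc (M *ᵥ x) ⬝ᵥ y = inner ℝ (WithLp.toLp 2 y) (WithLp.toLp 2 (M *ᵥ x)) := by
        rw [EuclideanSpace.inner_toLp_toLp, star_trivial]
    _ ≤ ‖WithLp.toLp 2 y‖ * ‖WithLp.toLp 2 (M *ᵥ x)‖ := real_inner_le_norm _ _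
    _ ≤ ‖WithLp.toLp 2 y‖ * (‖M‖ * ‖WithLp.toLp 2 x‖) := by
        gcongr; exact M.l2_opNorm_mulVec (WithLp.toLp 2 x)
    _ = ‖M‖ * ‖WithLp.toLp 2 x‖ * ‖WithLp.toLp 2 y‖ := by ring

section Smoothing
variable {n : ℕ}

lemma matNorm_eq_norm_toLp_mulVec {L X : Matrix (Fin n) (Fin n) ℝ} (hX : Xᵀ * X = L)
    (v : Fin n → ℝ) : matNorm L v = ‖WithLp.toLp 2 (X *ᵥ v)‖ := by
  rw [matNorm, norm_eq_sqrt_real_inner, EuclideanSpace.inner_toLp_toLp, star_trivial, ← hX,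
    ← mulVec_mulVec, dotProduct_transpose_mulVec, dotProduct_comm]

lemma smul_le_of_dotProduct_mulVec_le {A L : Matrix (Fin n) (Fin n) ℝ} (hA : A.IsHermitian)
    (hL : L.PosSemidef) {C τ : ℝ} (hτ : 0 ≤ τ) (hτC : τ * C ≤ 1)
    (h : ∀ u, u ⬝ᵥ A *ᵥ u ≤ C * (u ⬝ᵥ L *ᵥ u)) : τ • A ≤ L := by
  refine Matrix.le_iff.mpr <|
    .of_dotProduct_mulVec_nonneg (hL.1.sub (hA.smul (IsSelfAdjoint.all τ))) fun u => ?_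
  rw [star_trivial, sub_mulVec, dotProduct_sub, smul_mulVec, dotProduct_smul, smul_eq_mul,
    sub_nonneg]
  have hLu := hL.dotProduct_mulVec_nonneg u
  rw [star_trivial] at hLu
  nlinarith [h u]

lemma Matrix.PosDef.exists_sqrt {L : Matrix (Fin n) (Fin n) ℝ} (hL : L.PosDef) :
    ∃ X : Matrix (Fin n) (Fin n) ℝ, Xᵀ = X ∧ X * X = L ∧ IsUnit X.det :=
  ⟨CFC.sqrt L, (nonneg_iff_posSemidef.mp (CFC.sqrt_nonneg L)).isHermitian,
    CFC.sqrt_mul_sqrt_self L hL.posSemidef.nonneg,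
    (isUnit_iff_isUnit_det _).mp hL.isStrictlyPositive.sqrt.isUnit⟩

lemma semiconjBy_one_sub_smul {A L X : Matrix (Fin n) (Fin n) ℝ} (hXX : X * X = L)
    (hX : IsUnit X.det) (τ : ℝ) :
    SemiconjBy X (1 - τ • (L⁻¹ * A)) (1 - τ • (X⁻¹ * A * X⁻¹)) := by
  have hLinv : L⁻¹ = X⁻¹ * X⁻¹ := by rw [← hXX, Matrix.mul_inv_rev]
  simp only [SemiconjBy, hLinv, Matrix.mul_sub, Matrix.sub_mul, Matrix.mul_one, Matrix.one_mul,
    Matrix.mul_smul, Matrix.smul_mul, ← Matrix.mul_assoc, mul_nonsing_inv X hX]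
  simp only [Matrix.mul_assoc, nonsing_inv_mul X hX, Matrix.mul_one]

lemma smoothing_property {A L : Matrix (Fin n) (Fin n) ℝ} (hA : 0 ≤ A) (hL : L.PosDef)
    {τ : ℝ} (hτ : 0 ≤ τ) (hLA : τ • A ≤ L) {ν : ℕ} (hν : ν ≠ 0) (u w : Fin n → ℝ) :
    τ * (((1 - τ • (L⁻¹ * A)) ^ ν *ᵥ u) ⬝ᵥ A *ᵥ w) ≤ 1 / ν * matNorm L u * matNorm L w := by
  obtain ⟨X, hXT, hXX, hX⟩ := hL.exists_sqrt
  set Y := X⁻¹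
  have hYX : Y * X = 1 := nonsing_inv_mul X hX
  have hYT : Yᵀ = Y := by rw [transpose_nonsing_inv, hXT]
  set N := τ • (Y * A * Y)
  have hN0 : 0 ≤ N := by
    have h := star_left_conjugate_nonneg hA Y
    rw [star_eq_conjTranspose, conjTranspose_eq_transpose_of_trivial, hYT] at h
    exact (nonneg_iff_posSemidef.mp h |>.smul hτ).nonneg
  have hN1 : N ≤ 1 := by
    have h := star_left_conjugate_le_conjugate hLA Y
    rwa [star_eq_conjTranspose, conjTranspose_eq_transpose_of_trivial, hYT, mul_smul_comm,
      smul_mul_assoc, ← hXX, ← Matrix.mul_assoc, hYX, Matrix.one_mul, mul_nonsing_inv X hX] at h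
  set S := 1 - τ • (L⁻¹ * A)
  have hsim : τ • (Y * A * S ^ ν) = N * (1 - N) ^ ν * X := by
    rw [Matrix.mul_assoc N, ← ((semiconjBy_one_sub_smul hXX hX τ).pow_right ν).eq,
      Matrix.smul_mul, ← Matrix.mul_assoc, Matrix.mul_assoc (Y * A), hYX, Matrix.mul_one]
  have hAT : Aᵀ = A := (nonneg_iff_posSemidef.mp hA).isHermitian
  have hid : τ * ((S ^ ν *ᵥ u) ⬝ᵥ A *ᵥ w) = ((N * (1 - N) ^ ν) *ᵥ (X *ᵥ u)) ⬝ᵥ (X *ᵥ w) := by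
    rw [mulVec_mulVec, ← hsim, smul_mulVec, smul_dotProduct, smul_eq_mul, ← mulVec_mulVec,
      ← mulVec_mulVec, ← vecMul_transpose Y, hYT, ← dotProduct_mulVec, mulVec_mulVec _ Y X, hYX,
      one_mulVec, ← vecMul_transpose A (S ^ ν *ᵥ u), hAT, ← dotProduct_mulVec]
  have hXL : Xᵀ * X = L := by rw [hXT, hXX]
  rw [hid, matNorm_eq_norm_toLp_mulVec hXL, matNorm_eq_norm_toLp_mulVec hXL]
  calc _ ≤ ‖N * (1 - N) ^ ν‖ * ‖WithLp.toLp 2 (X *ᵥ u)‖ * ‖WithLp.toLp 2 (X *ᵥ w)‖ :=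
        dotProduct_mulVec_le_l2_opNorm _ _ _
    _ ≤ _ := by gcongr; exact norm_mul_one_sub_pow_le hN0 hN1 hν

end Smoothing

lemma mulVec_injective_of_rank_eq_card {R ι κ : Type*} [Field R] [Fintype κ]
    (P : Matrix ι κ R) (hP : P.rank = Fintype.card κ) : Function.Injective P.mulVec := by
  have h := LinearMap.finrank_range_add_finrank_ker P.mulVecLin
  rw [← Matrix.rank, hP, Module.finrank_fintype_fun_eq_card] at h
  exact LinearMap.ker_eq_bot.mp (Submodule.finrank_eq_zero.mp
    (show Module.finrank R (LinearMap.ker P.mulVecLin) = 0 by omega))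

lemma Matrix.PosDef.isUnit_det_transpose_mul_mul {ι κ : Type*} [Fintype ι] [Fintype κ]
    [DecidableEq κ] {A : Matrix ι ι ℝ} (hA : A.PosDef) {P : Matrix ι κ ℝ}
    (hP : P.rank = Fintype.card κ) : IsUnit (Pᵀ * A * P).det :=
  isUnit_iff_ne_zero.mpr
    (hA.conjTranspose_mul_mul_same (mulVec_injective_of_rank_eq_card P hP)).det_pos.ne'

noncomputable def coarseCorrection {R ι κ : Type*} [CommRing R] [Fintype ι] [Fintype κ]
    [DecidableEq κ] (A : Matrix ι ι R) (P : Matrix ι κ R) : Matrix ι ι R :=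
  P * (Pᵀ * A * P)⁻¹ * (Pᵀ * A)

section CoarseCorrection
variable {R ι κ : Type*} [CommRing R] [Fintype ι] [Fintype κ] [DecidableEq κ]
  {A : Matrix ι ι R} {P : Matrix ι κ R}

lemma isIdempotentElem_coarseCorrection (hAc : IsUnit (Pᵀ * A * P).det) :
    IsIdempotentElem (coarseCorrection A P) := by
  have h : (Pᵀ * A) * (P * (Pᵀ * A * P)⁻¹) = 1 := by
    rw [← Matrix.mul_assoc, mul_nonsing_inv _ hAc]
  rw [IsIdempotentElem, coarseCorrection]
  calc P * (Pᵀ * A * P)⁻¹ * (Pᵀ * A) * (P * (Pᵀ * A * P)⁻¹ * (Pᵀ * A))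
      = P * (Pᵀ * A * P)⁻¹ * ((Pᵀ * A) * (P * (Pᵀ * A * P)⁻¹) * (Pᵀ * A)) := by
        simp only [Matrix.mul_assoc]
    _ = P * (Pᵀ * A * P)⁻¹ * (Pᵀ * A) := by rw [h, Matrix.one_mul]

lemma transpose_one_sub_coarseCorrection_mul [DecidableEq ι] (hA : Aᵀ = A) :
    (1 - coarseCorrection A P)ᵀ * A = A * (1 - coarseCorrection A P) := by
  simp only [coarseCorrection, transpose_sub, transpose_one, Matrix.sub_mul, Matrix.mul_sub,
    Matrix.one_mul, Matrix.mul_one, transpose_mul, transpose_nonsing_inv, transpose_transpose, hA,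
    Matrix.mul_assoc]

end CoarseCorrection

lemma dotProduct_mulVec_of_isIdempotentElem {ι R : Type*} [Fintype ι] [CommRing R]
    {A Q : Matrix ι ι R} (hQ : IsIdempotentElem Q) (hQA : Qᵀ * A = A * Q) (e : ι → R) :
    (Q *ᵥ e) ⬝ᵥ A *ᵥ Q *ᵥ e = e ⬝ᵥ A *ᵥ Q *ᵥ e := by
  rw [dotProduct_comm, ← dotProduct_transpose_mulVec, mulVec_mulVec, mulVec_mulVec, hQA,
    Matrix.mul_assoc, hQ.eq, mulVec_mulVec]

/-- two-grid convergence. Under the inverse inequality (constant `C_I`)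
and the approximation property (constant `C_A`), with `τ ∈ (0, 1/C_I]`, `ν ≥ 1` and
`S = I − τ L⁻¹ A`, the two-grid iteration matrix `(I−T) Sᵛ` satisfies
`‖(I−T) Sᵛ u‖_L ≤ (C_A/(τν)) ‖u‖_L`; in particular for `ν > C_A/τ` the rate
`q = C_A/(τν)` satisfies `q < 1`. -/
theorem stmt2 {n m : ℕ} (A L : Matrix (Fin n) (Fin n) ℝ)
    (hA : A.PosDef) (hL : L.PosDef)
    (P : Matrix (Fin n) (Fin m) ℝ) (hP : P.rank = m)
    (T : Matrix (Fin n) (Fin n) ℝ) (hT : T = P * (Pᵀ * A * P)⁻¹ * (Pᵀ * A))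
    (C_I C_A : ℝ) (hCI : 0 < C_I) (hCA : 0 < C_A)
    (hinv : ∀ u : Fin n → ℝ, u ⬝ᵥ A *ᵥ u ≤ C_I * (u ⬝ᵥ L *ᵥ u))
    (happrox : ∀ u : Fin n → ℝ,
        ((1 - T) *ᵥ u) ⬝ᵥ L *ᵥ ((1 - T) *ᵥ u) ≤ C_A * (u ⬝ᵥ A *ᵥ u))
    (τ : ℝ) (hτ0 : 0 < τ) (hτ1 : τ ≤ 1 / C_I)
    (ν : ℕ) (hν : 1 ≤ ν)
    (S : Matrix (Fin n) (Fin n) ℝ) (hS : S = 1 - τ • (L⁻¹ * A)) :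
    (∀ u : Fin n → ℝ,
        matNorm L (((1 - T) * S ^ ν) *ᵥ u) ≤ (C_A / (τ * (ν : ℝ))) * matNorm L u) ∧
    (C_A / τ < (ν : ℝ) → C_A / (τ * (ν : ℝ)) < 1) := by
  subst hS
  change T = coarseCorrection A P at hT
  have hτν : 0 < τ * ν := by positivity
  have hAc := hA.isUnit_det_transpose_mul_mul (P := P) (by simpa using hP)
  have hQ : IsIdempotentElem (1 - T) := hT ▸ (isIdempotentElem_coarseCorrection hAc).one_sub
  have hQA : (1 - T)ᵀ * A = A * (1 - T) :=
    hT ▸ transpose_one_sub_coarseCorrection_mul hA.isHermitian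
  have hLA : τ • A ≤ L := smul_le_of_dotProduct_mulVec_le hA.isHermitian hL.posSemidef hτ0.le
    (by rwa [le_div_iff₀ hCI] at hτ1) hinv
  refine ⟨fun u => ?_, fun h => (div_lt_one hτν).mpr (by rwa [div_lt_iff₀ hτ0, mul_comm] at h)⟩
  set e := (1 - τ • (L⁻¹ * A)) ^ ν *ᵥ u
  set w := (1 - T) *ᵥ e
  have hQw : (1 - T) *ᵥ w = w := by rw [mulVec_mulVec, hQ.eq]
  have hwAw : w ⬝ᵥ A *ᵥ w = e ⬝ᵥ A *ᵥ w := dotProduct_mulVec_of_isIdempotentElem hQ hQA e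
  have key : matNorm L w ^ 2 ≤ C_A / (τ * ν) * matNorm L u * matNorm L w :=
    calc matNorm L w ^ 2 = w ⬝ᵥ L *ᵥ w :=
          Real.sq_sqrt (by simpa using hL.posSemidef.dotProduct_mulVec_nonneg w)
      _ ≤ C_A * (w ⬝ᵥ A *ᵥ w) := by simpa only [hQw] using happrox w
      _ = C_A / τ * (τ * (e ⬝ᵥ A *ᵥ w)) := by rw [hwAw]; field_simp
      _ ≤ C_A / τ * (1 / ν * matNorm L u * matNorm L w) := by
        refine mul_le_mul_of_nonneg_left ?_ (by positivity)
        exact smoothing_property hA.posSemidef.nonneg hL hτ0.le hLA (by omega) u w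
      _ = C_A / (τ * ν) * matNorm L u * matNorm L w := by field_simp
  rw [← mulVec_mulVec]
  change matNorm L w ≤ _
  have hc : 0 ≤ C_A / (τ * ν) * matNorm L u := by unfold matNorm; positivity
  nlinarith
end

section
/- For every integer p ≥ 1 and every integer n > p, every spline u ∈ S̃_{p,n} satisfies the inverse inequality |u|_{H¹(0,1)} ≤ 2·√3·n·‖u‖_{L²(0,1)}. -/
open MeasureTheory

/-- `u` belongs to the spline space `S_{p,n}` on `[0,1]` with uniform grid size
`h = 1/n`: it is `(p−1)`-times continuously differentiable on `[0,1]` and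
coincides on each subinterval `[(i−1)h, ih]` with a polynomial of degree `≤ p`. -/
def IsSpline (p n : ℕ) (u : ℝ → ℝ) : Prop :=
  ContDiffOn ℝ (p - 1 : ℕ) u (Set.Icc 0 1) ∧
  ∀ i : ℕ, 1 ≤ i → i ≤ n →
    ∃ q : Polynomial ℝ, q.natDegree ≤ p ∧
      ∀ x ∈ Set.Icc (((i : ℝ) - 1) / n) ((i : ℝ) / n), u x = q.eval x

/-- `u` belongs to the subspace `S̃_{p,n} ⊆ S_{p,n}` of splines whose odd-order
derivatives of order `< p` vanish at both endpoints of `[0,1]`. -/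
def IsSplineTilde (p n : ℕ) (u : ℝ → ℝ) : Prop :=
  IsSpline p n u ∧
  ∀ l : ℕ, 2 * l + 1 < p →
    iteratedDerivWithin (2 * l + 1) u (Set.Icc 0 1) 0 = 0 ∧
    iteratedDerivWithin (2 * l + 1) u (Set.Icc 0 1) 1 = 0

/-- Squared `L²(0,1)`-norm. -/
noncomputable def L2sq (u : ℝ → ℝ) : ℝ := ∫ x in (0:ℝ)..1, u x ^ 2

/-- Squared `H¹(0,1)`-seminorm (the derivative is taken pointwise; for the
functions considered it exists away from a finite set of knots). -/
noncomputable def H1semisq (u : ℝ → ℝ) : ℝ := ∫ x in (0:ℝ)..1, deriv u x ^ 2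

/-- Squared `H¹(0,1)`-norm. -/
noncomputable def H1sq (u : ℝ → ℝ) : ℝ := L2sq u + H1semisq u

/-- `u` belongs to `H¹(0,1)` with (weak) derivative `u'`: `u` is continuous on
`[0,1]` and `u'` is square-integrable on `(0,1)` with
`u x = u 0 + ∫₀ˣ u'`. -/
def IsH1 (u u' : ℝ → ℝ) : Prop :=
  ContinuousOn u (Set.Icc 0 1) ∧
  IntegrableOn u' (Set.Ioo 0 1) ∧
  IntegrableOn (fun x => u' x ^ 2) (Set.Ioo 0 1) ∧
  ∀ x ∈ Set.Icc (0:ℝ) 1, u x = u 0 + ∫ t in (0:ℝ)..x, u' t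

/-! On a cell of width `h` a linear polynomial satisfies `h² ∫ P'² ≤ 12 ∫ P²`, which settles
`p ≤ 1`. For `p ≥ 2`, integrating by parts cell by cell gives `|u|²_{H¹} = -(u, u'')`: the
`C¹` matching cancels the terms at the interior knots, and the boundary conditions kill those at
`0` and `1`. Cauchy–Schwarz then gives `|u|⁴_{H¹} ≤ ‖u‖² |u'|²_{H¹}`. The derivative `u'` is a
spline of degree `p - 1` whose derivatives of even order vanish at the endpoints, so an
induction on `p` that keeps track of this parity yields `|u'|²_{H¹} ≤ 12 n² |u|²_{H¹}`, and
hence `|u|²_{H¹} ≤ 12 n² ‖u‖²`. -/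

open Polynomial Set Finset Topology

theorem div_le_add_one_div (n i : ℕ) : (i / n : ℝ) ≤ (i + 1) / n := by
  gcongr; linarith

theorem integral_derivative_mul_eval (P Q : ℝ[X]) (a b : ℝ) :
    ∫ x in a..b, (derivative P).eval x * Q.eval x =
      P.eval b * Q.eval b - P.eval a * Q.eval a -
        ∫ x in a..b, P.eval x * (derivative Q).eval x := by
  have := intervalIntegral.integral_mul_deriv_eq_deriv_mul (a := a) (b := b)
    (fun x _ => P.hasDerivAt x) (fun x _ => Q.hasDerivAt x)
    (Continuous.intervalIntegrable (by fun_prop) _ _)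
    (Continuous.intervalIntegrable (by fun_prop) _ _)
  linarith

theorem integral_derivative_mul_self_le_of_natDegree_le_one {P : ℝ[X]} (hP : P.natDegree ≤ 1)
    {a b : ℝ} (hab : a ≤ b) :
    (b - a) ^ 2 * ∫ x in a..b, (derivative P).eval x * (derivative P).eval x ≤
      12 * ∫ x in a..b, P.eval x * P.eval x := by
  obtain ⟨c₁, c₀, rfl⟩ := exists_eq_X_add_C_of_natDegree_le_one hP
  have hderiv : ∫ x in a..b, (derivative (C c₁ * X + C c₀)).eval x *
      (derivative (C c₁ * X + C c₀)).eval x = c₁ ^ 2 * (b - a) := by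
    simp only [derivative_add, derivative_mul, derivative_C, derivative_X, zero_mul, zero_add,
      add_zero, mul_one, eval_C, intervalIntegral.integral_const, smul_eq_mul]
    ring
  have hsq : ∫ x in a..b, (C c₁ * X + C c₀).eval x * (C c₁ * X + C c₀).eval x =
      c₁ ^ 2 * (b ^ 3 - a ^ 3) / 3 + c₁ * c₀ * (b ^ 2 - a ^ 2) + c₀ ^ 2 * (b - a) := by
    rw [intervalIntegral.integral_eq_sub_of_hasDerivAt
      (f := fun x => c₁ ^ 2 * x ^ 3 / 3 + c₁ * c₀ * x ^ 2 + c₀ ^ 2 * x)]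
    · ring
    · intro x _
      convert (((hasDerivAt_pow 3 x).const_mul (c₁ ^ 2)).div_const 3).add
        (((hasDerivAt_pow 2 x).const_mul (c₁ * c₀)).add ((hasDerivAt_id x).const_mul (c₀ ^ 2)))
        using 1
      · funext y
        simp only [Pi.add_apply, id_eq]
        ring
      · simp only [eval_add, eval_mul, eval_C, eval_X]
        ring
    · exact Continuous.intervalIntegrable (by fun_prop) _ _
  rw [hderiv, hsq]
  -- the gap `12 ∫ P² - (b - a)² ∫ P'²` equals `12 (b - a) P((a + b) / 2)²`
  nlinarith [mul_nonneg (sub_nonneg.2 hab) (sq_nonneg (c₁ * (a + b) + 2 * c₀))]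

theorem LinearMap.BilinForm.apply_self_le_of_apply_self_eq_neg {M : Type*} [AddCommGroup M]
    [Module ℝ M] {B : LinearMap.BilinForm ℝ M} (hB : LinearMap.IsSymm B) (hpos : ∀ x, 0 ≤ B x x)
    {x y z : M} {c : ℝ} (hc : 0 ≤ c) (hy : B y y = -B x z) (hz : B z z ≤ c * B y y) :
    B y y ≤ c * B x x := by
  have hsq : B y y ^ 2 ≤ c * B x x * B y y := by
    calc B y y ^ 2 = B x z ^ 2 := by rw [hy, neg_sq]
      _ ≤ B x x * B z z := B.apply_sq_le_of_symm hpos hB x z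
      _ ≤ B x x * (c * B y y) := mul_le_mul_of_nonneg_left hz (hpos x)
      _ = c * B x x * B y y := by ring
  rcases (hpos y).eq_or_lt with hzero | hpos'
  · rw [← hzero]
    exact mul_nonneg hc (hpos x)
  · exact le_of_mul_le_mul_right (by rwa [← sq]) hpos'

/-- `q i` is the piece on `[i/n, (i+1)/n]`; the pieces with `i ≥ n` play no role. -/
noncomputable def meshForm (n : ℕ) : LinearMap.BilinForm ℝ (ℕ → ℝ[X]) :=
  LinearMap.mk₂ ℝ
    (fun q r => ∑ i ∈ range n, ∫ x in (i / n : ℝ)..(i + 1) / n, (q i).eval x * (r i).eval x)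
    (fun q q' r => by
      simp only [Pi.add_apply, eval_add, add_mul, ← sum_add_distrib]
      refine sum_congr rfl fun i _ => intervalIntegral.integral_add ?_ ?_ <;>
        exact Continuous.intervalIntegrable (by fun_prop) _ _)
    (fun c q r => by
      simp only [Pi.smul_apply, eval_smul, smul_eq_mul, mul_assoc, mul_sum,
        intervalIntegral.integral_const_mul])
    (fun q r r' => by
      simp only [Pi.add_apply, eval_add, mul_add, ← sum_add_distrib]
      refine sum_congr rfl fun i _ => intervalIntegral.integral_add ?_ ?_ <;>
        exact Continuous.intervalIntegrable (by fun_prop) _ _)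
    (fun c q r => by
      simp only [Pi.smul_apply, eval_smul, smul_eq_mul, mul_left_comm _ c, mul_sum,
        intervalIntegral.integral_const_mul])

namespace meshForm

variable {n : ℕ}

theorem apply (q r : ℕ → ℝ[X]) :
    meshForm n q r =
      ∑ i ∈ range n, ∫ x in (i / n : ℝ)..(i + 1) / n, (q i).eval x * (r i).eval x :=
  rfl

theorem self_nonneg (q : ℕ → ℝ[X]) : 0 ≤ meshForm n q q := by
  rw [apply]
  exact sum_nonneg fun i _ =>
    intervalIntegral.integral_nonneg (div_le_add_one_div n i) fun x _ => mul_self_nonneg _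

theorem derivative_left (hn : 0 < n) (q r : ℕ → ℝ[X])
    (hq : ∀ i, i + 1 < n → (q i).eval ((i + 1 : ℝ) / n) = (q (i + 1)).eval ((i + 1 : ℝ) / n))
    (hr : ∀ i, i + 1 < n → (r i).eval ((i + 1 : ℝ) / n) = (r (i + 1)).eval ((i + 1 : ℝ) / n)) :
    meshForm n (derivative ∘ q) r =
      (q (n - 1)).eval 1 * (r (n - 1)).eval 1 - (q 0).eval 0 * (r 0).eval 0 -
        meshForm n q (derivative ∘ r) := by
  obtain ⟨m, rfl⟩ := Nat.exists_eq_add_one_of_ne_zero hn.ne'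
  -- by the matching at the knots the right-end term of cell `i` is `g (i + 1)`: they telescope
  set g : ℕ → ℝ := fun i =>
    (q i).eval ((i : ℝ) / (m + 1 : ℕ)) * (r i).eval ((i : ℝ) / (m + 1 : ℕ))
  have hg : ∀ i ∈ range m,
      (q i).eval ((i + 1 : ℝ) / (m + 1 : ℕ)) * (r i).eval ((i + 1 : ℝ) / (m + 1 : ℕ)) =
        g (i + 1) := by
    intro i hi
    have hi' : i + 1 < m + 1 := by simpa using hi
    rw [hq i hi', hr i hi', ← Nat.cast_add_one i]
  simp only [apply, Function.comp_apply, integral_derivative_mul_eval, sum_sub_distrib,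
    sum_range_succ _ m]
  rw [sum_congr rfl hg]
  have htel := sum_range_sub g m
  rw [sum_sub_distrib] at htel
  have hlast : ((m : ℝ) + 1) / (m + 1 : ℕ) = 1 := by push_cast; field_simp
  simp only [g, hlast, Nat.add_sub_cancel, Nat.cast_zero, zero_div] at htel ⊢
  linarith

theorem isSymm : LinearMap.IsSymm (meshForm n) :=
  LinearMap.isSymm_def.2 fun q r => by simp only [apply, RingHom.id_apply, mul_comm]

theorem derivative_le_of_natDegree_le_one (q : ℕ → ℝ[X])
    (hdeg : ∀ i < n, (q i).natDegree ≤ 1) :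
    meshForm n (derivative ∘ q) (derivative ∘ q) ≤ 12 * n ^ 2 * meshForm n q q := by
  rw [apply, apply, mul_sum]
  refine sum_le_sum fun i hi => ?_
  have hn : (0 : ℝ) < n := Nat.cast_pos.2 (Nat.zero_lt_of_lt (mem_range.1 hi))
  have h := integral_derivative_mul_self_le_of_natDegree_le_one (hdeg i (mem_range.1 hi))
    (div_le_add_one_div n i)
  rw [show (i + 1 : ℝ) / n - i / n = (n : ℝ)⁻¹ by ring, inv_pow,
    inv_mul_le_iff₀ (by positivity)] at h
  exact h.trans_eq (by ring)

/-- `s` fixes the parity of the derivative orders that vanish at `0` and `1`: the space `S̃` has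
`s = 0`, and passing to the derivatives flips it. -/
theorem derivative_le (hn : 0 < n) (p s : ℕ) (q : ℕ → ℝ[X])
    (hdeg : ∀ i < n, (q i).natDegree ≤ p)
    (hknot : ∀ k < p, ∀ i, i + 1 < n → (derivative^[k] (q i)).eval ((i + 1 : ℝ) / n) =
      (derivative^[k] (q (i + 1))).eval ((i + 1 : ℝ) / n))
    (hend : ∀ k < p, Odd (k + s) →
      (derivative^[k] (q 0)).eval 0 = 0 ∧ (derivative^[k] (q (n - 1))).eval 1 = 0) :
    meshForm n (derivative ∘ q) (derivative ∘ q) ≤ 12 * n ^ 2 * meshForm n q q := by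
  induction p generalizing s q with
  | zero =>
    exact derivative_le_of_natDegree_le_one q fun i hi => (hdeg i hi).trans zero_le_one
  | succ p ih =>
    rcases Nat.eq_zero_or_pos p with rfl | hp
    · exact derivative_le_of_natDegree_le_one q hdeg
    have hderiv : meshForm n (derivative ∘ derivative ∘ q) (derivative ∘ derivative ∘ q) ≤
        12 * n ^ 2 * meshForm n (derivative ∘ q) (derivative ∘ q) := by
      refine ih (s + 1) (derivative ∘ q)
        (fun i hi => (natDegree_derivative_le _).trans (by have := hdeg i hi; omega))
        (fun k hk i hi => ?_) (fun k hk hodd => ?_)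
      · simpa only [Function.comp_apply, ← Function.iterate_succ_apply] using
          hknot (k + 1) (by omega) i hi
      · simpa only [Function.comp_apply, ← Function.iterate_succ_apply] using
          hend (k + 1) (by omega) (by rwa [add_right_comm])
    have hibp : meshForm n (derivative ∘ q) (derivative ∘ q) =
        -meshForm n q (derivative ∘ derivative ∘ q) := by
      rw [derivative_left hn q (derivative ∘ q) (hknot 0 (by omega)) (hknot 1 (by omega))]
      rcases Nat.even_or_odd s with hs | hs
      · obtain ⟨h0, h1⟩ := hend 1 (by omega) (by rw [add_comm]; exact hs.add_one)
        simp only [Function.iterate_one] at h0 h1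
        simp [h0, h1]
      · obtain ⟨h0, h1⟩ := hend 0 (by omega) (by rwa [zero_add])
        simp only [Function.iterate_zero, id] at h0 h1
        simp [h0, h1]
    exact LinearMap.BilinForm.apply_self_le_of_apply_self_eq_neg isSymm self_nonneg
      (by positivity) hibp hderiv

end meshForm

theorem Polynomial.iteratedDeriv_eval (k : ℕ) (P : ℝ[X]) :
    iteratedDeriv k (fun x => P.eval x) = fun x => (derivative^[k] P).eval x := by
  induction k generalizing P with
  | zero => rfl
  | succ k ih =>
    have hderiv : (_root_.deriv fun x => P.eval x) = fun x => (derivative P).eval x := by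
      ext x
      exact P.deriv
    rw [iteratedDeriv_succ', hderiv, ih, Function.iterate_succ_apply]

theorem eqOn_iteratedDerivWithin_of_eqOn_Icc {u : ℝ → ℝ} {P : ℝ[X]} {s : Set ℝ} {a b : ℝ}
    {k : ℕ} (hs : UniqueDiffOn ℝ s) (hab : a < b) (hsub : Icc a b ⊆ s)
    (hu : EqOn u (fun x => P.eval x) (Icc a b))
    (hcont : ContinuousOn (iteratedDerivWithin k u s) s) :
    EqOn (iteratedDerivWithin k u s) (fun x => (derivative^[k] P).eval x) (Icc a b) := by
  refine EqOn.of_subset_closure (s := Ioo a b) (fun x hx => ?_) (hcont.mono hsub)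
    (Polynomial.continuousOn _) Ioo_subset_Icc_self (closure_Ioo hab.ne).ge
  have hux : u =ᶠ[𝓝[s] x] fun x => P.eval x :=
    (hu.eventuallyEq_of_mem (Icc_mem_nhds hx.1 hx.2)).filter_mono nhdsWithin_le_nhds
  have hP : ContDiff ℝ k fun x => P.eval x := by simpa using P.contDiff_aeval (𝕜 := ℝ) k
  rw [hux.iteratedDerivWithin_eq (hu (Ioo_subset_Icc_self hx)),
    iteratedDerivWithin_eq_iteratedDeriv hs hP.contDiffAt (hsub (Ioo_subset_Icc_self hx)),
    Polynomial.iteratedDeriv_eval]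

theorem Icc_div_subset_Icc_zero_one {i n : ℕ} (hi : i < n) :
    Icc ((i : ℝ) / n) ((i + 1) / n) ⊆ Icc 0 1 :=
  Icc_subset_Icc (by positivity)
    (div_le_one_of_le₀ (by exact_mod_cast hi) (Nat.cast_nonneg _))

theorem integral_zero_one_eq_sum_of_eqOn {n : ℕ} (hn : 0 < n) {f : ℝ → ℝ} {g : ℕ → ℝ → ℝ}
    (hg : ∀ i < n, Continuous (g i)) (hfg : ∀ i < n, EqOn f (g i) (Ioo (i / n) ((i + 1) / n))) :
    ∫ x in (0 : ℝ)..1, f x = ∑ i ∈ range n, ∫ x in (i / n : ℝ)..(i + 1) / n, g i x := by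
  have hfg' : ∀ i < n, EqOn f (g i) (uIoo (i / n) ((i + 1) / n)) := fun i hi => by
    rw [uIoo_of_le (div_le_add_one_div n i)]
    exact hfg i hi
  have hsum := intervalIntegral.sum_integral_adjacent_intervals (a := fun i : ℕ => (i : ℝ) / n)
    (f := f) (μ := volume) (n := n) fun i hi => by
      rw [Nat.cast_add_one]
      exact ((hg i hi).intervalIntegrable _ _).congr_uIoo (hfg' i hi).symm
  have hn' : (n : ℝ) ≠ 0 := Nat.cast_ne_zero.2 hn.ne'
  simp only [Nat.cast_add_one, Nat.cast_zero, zero_div, div_self hn'] at hsum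
  rw [← hsum]
  exact sum_congr rfl fun i hi => intervalIntegral.integral_congr_uIoo (hfg' i (mem_range.1 hi))

theorem IsSpline.exists_pieces {p n : ℕ} {u : ℝ → ℝ} (hu : IsSpline p n u) :
    ∃ q : ℕ → ℝ[X], ∀ i < n,
      (q i).natDegree ≤ p ∧ EqOn u (fun x => (q i).eval x) (Icc (i / n) ((i + 1) / n)) := by
  have h : ∀ i, ∃ P : ℝ[X], i < n →
      P.natDegree ≤ p ∧ EqOn u (fun x => P.eval x) (Icc (i / n) ((i + 1) / n)) := by
    intro i
    by_cases hi : i < n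
    · obtain ⟨P, hdeg, hP⟩ := hu.2 (i + 1) (by omega) hi
      exact ⟨P, fun _ => ⟨hdeg, fun x hx => hP x (by simpa using hx)⟩⟩
    · exact ⟨0, fun h => absurd h hi⟩
  choose q hq using h
  exact ⟨q, hq⟩

theorem ContDiffOn.eqOn_iteratedDerivWithin_piece {m n : ℕ} {u : ℝ → ℝ}
    (hu : ContDiffOn ℝ m u (Icc 0 1)) {q : ℕ → ℝ[X]}
    (hq : ∀ i < n, EqOn u (fun x => (q i).eval x) (Icc (i / n) ((i + 1) / n)))
    {k : ℕ} (hk : k ≤ m) {i : ℕ} (hi : i < n) :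
    EqOn (iteratedDerivWithin k u (Icc 0 1)) (fun x => (derivative^[k] (q i)).eval x)
      (Icc (i / n) ((i + 1) / n)) :=
  eqOn_iteratedDerivWithin_of_eqOn_Icc (uniqueDiffOn_Icc zero_lt_one)
    (div_lt_div_of_pos_right (by linarith) (by exact_mod_cast Nat.zero_lt_of_lt hi))
    (Icc_div_subset_Icc_zero_one hi) (hq i hi)
    (hu.continuousOn_iteratedDerivWithin (by exact_mod_cast hk) (uniqueDiffOn_Icc zero_lt_one))

theorem IsSplineTilde.exists_pieces {p n : ℕ} {u : ℝ → ℝ} (hn : 0 < n)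
    (hu : IsSplineTilde p n u) :
    ∃ q : ℕ → ℝ[X],
      (∀ i < n,
        (q i).natDegree ≤ p ∧ EqOn u (fun x => (q i).eval x) (Icc (i / n) ((i + 1) / n))) ∧
      (∀ k < p, ∀ i, i + 1 < n → (derivative^[k] (q i)).eval ((i + 1 : ℝ) / n) =
        (derivative^[k] (q (i + 1))).eval ((i + 1 : ℝ) / n)) ∧
      (∀ k < p, Odd k →
        (derivative^[k] (q 0)).eval 0 = 0 ∧ (derivative^[k] (q (n - 1))).eval 1 = 0) := by
  obtain ⟨⟨hsmooth, hpoly⟩, hend⟩ := hu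
  obtain ⟨q, hq⟩ := IsSpline.exists_pieces ⟨hsmooth, hpoly⟩
  have hD {k : ℕ} (hk : k < p) {i : ℕ} (hi : i < n) :=
    hsmooth.eqOn_iteratedDerivWithin_piece (fun i hi => (hq i hi).2) (Nat.le_sub_one_of_lt hk) hi
  refine ⟨q, hq, fun k hk i hi => ?_, fun k hk hodd => ?_⟩
  · have hleft := hD hk (i := i + 1) hi (Set.left_mem_Icc.2 (div_le_add_one_div n (i + 1)))
    push_cast at hleft
    exact (hD hk (by omega) (Set.right_mem_Icc.2 (div_le_add_one_div n i))).symm.trans hleft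
  · obtain ⟨l, rfl⟩ := hodd
    obtain ⟨h0, h1⟩ := hend l hk
    have hat0 := hD hk hn (Set.left_mem_Icc.2 (div_le_add_one_div n 0))
    have hat1 :=
      hD hk (Nat.sub_one_lt hn.ne') (Set.right_mem_Icc.2 (div_le_add_one_div n (n - 1)))
    rw [Nat.cast_zero, zero_div] at hat0
    rw [Nat.cast_pred hn, sub_add_cancel, div_self (by positivity)] at hat1
    exact ⟨hat0.symm.trans h0, hat1.symm.trans h1⟩

theorem stmt6_general (p n : ℕ) (hn : p < n)
    (u : ℝ → ℝ) (hu : IsSplineTilde p n u) :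
    Real.sqrt (H1semisq u) ≤ 2 * Real.sqrt 3 * (n : ℝ) * Real.sqrt (L2sq u) := by
  have hn0 : 0 < n := Nat.zero_lt_of_lt hn
  obtain ⟨q, hq, hknot, hend⟩ := hu.exists_pieces hn0
  have hL2 : L2sq u = meshForm n q q :=
    integral_zero_one_eq_sum_of_eqOn hn0 (fun i _ => by fun_prop) fun i hi x hx => by
      simp only [sq, (hq i hi).2 (Ioo_subset_Icc_self hx)]
  have hH1 : H1semisq u = meshForm n (derivative ∘ q) (derivative ∘ q) :=
    integral_zero_one_eq_sum_of_eqOn hn0 (fun i _ => by fun_prop) fun i hi x hx => by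
      rw [((hq i hi).2.eventuallyEq_of_mem (Icc_mem_nhds hx.1 hx.2)).deriv_eq, Polynomial.deriv,
        sq, Function.comp_apply]
  have hineq : H1semisq u ≤ 12 * n ^ 2 * L2sq u := by
    rw [hH1, hL2]
    exact meshForm.derivative_le hn0 p 0 q (fun i hi => (hq i hi).1) hknot hend
  rw [Real.sqrt_le_left (by positivity), mul_pow, mul_pow, mul_pow, Real.sq_sqrt zero_le_three,
    Real.sq_sqrt (hL2 ▸ meshForm.self_nonneg q)]
  linarith

/-- robust inverse inequality in `S̃_{p,n}`:
`|u|_{H¹(0,1)} ≤ 2√3 · n · ‖u‖_{L²(0,1)}` for every `u ∈ S̃_{p,n}`, `n > p ≥ 1`. -/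
theorem stmt6 (p n : ℕ) (hp : 1 ≤ p) (hn : p < n)
    (u : ℝ → ℝ) (hu : IsSplineTilde p n u) :
    Real.sqrt (H1semisq u) ≤ 2 * Real.sqrt 3 * (n : ℝ) * Real.sqrt (L2sq u) :=
  stmt6_general p n hn u hu
end

section
/- Let M be an SPD n×n real matrix and let K be a symmetric positive semidefinite n×n real matrix. Set 𝓐 := K⊗M + M⊗K + M⊗M and 𝓜 := M⊗M. Then (K+M)⊗(K+M) ≼ 𝓐·𝓜⁻¹·𝓐. -/
open Matrix Kronecker

/-! Expanding with `(M ⊗ M)⁻¹ = M⁻¹ ⊗ M⁻¹`, the difference `𝓐 𝓜⁻¹ 𝓐 - (K + M) ⊗ (K + M)` equals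
`(K M⁻¹ K) ⊗ M + M ⊗ (K M⁻¹ K) + K ⊗ K + K ⊗ M + M ⊗ K`, a sum of Kronecker products of
positive semidefinite matrices. -/

namespace Matrix

variable {m : Type*} [Fintype m] [DecidableEq m]

theorem kronecker_stiffness_mul_inv_mul_sub_eq {α : Type*} [CommRing α] (M K : Matrix m m α)
    (hM : IsUnit M.det) :
    (K ⊗ₖ M + M ⊗ₖ K + M ⊗ₖ M) * (M ⊗ₖ M)⁻¹ * (K ⊗ₖ M + M ⊗ₖ K + M ⊗ₖ M)
      - (K + M) ⊗ₖ (K + M)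
      = (K * M⁻¹ * K) ⊗ₖ M + M ⊗ₖ (K * M⁻¹ * K) + K ⊗ₖ K + K ⊗ₖ M + M ⊗ₖ K := by
  rw [inv_kronecker]
  simp only [add_mul, mul_add, ← mul_kronecker_mul, mul_nonsing_inv _ hM, nonsing_inv_mul _ hM,
    add_kronecker, kronecker_add, mul_assoc, mul_one, one_mul]
  abel

open scoped ComplexOrder in
theorem IsHermitian.posSemidef_mul_inv_mul_self {𝕜 : Type*} [RCLike 𝕜] {M K : Matrix m m 𝕜}
    (hM : M.PosDef) (hK : K.IsHermitian) : (K * M⁻¹ * K).PosSemidef := by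
  simpa only [hK.eq] using hM.inv.posSemidef.mul_mul_conjTranspose_same K

end Matrix

/-- with `M` SPD and `K` symmetric positive semidefinite,
`𝓐 = K⊗M + M⊗K + M⊗M` and `𝓜 = M⊗M` satisfy `(K+M)⊗(K+M) ≼ 𝓐 𝓜⁻¹ 𝓐`. -/
theorem stmt14 {n : ℕ} (M K : Matrix (Fin n) (Fin n) ℝ)
    (hM : M.PosDef) (hK : K.PosSemidef) :
    ((K ⊗ₖ M + M ⊗ₖ K + M ⊗ₖ M) * (M ⊗ₖ M)⁻¹ * (K ⊗ₖ M + M ⊗ₖ K + M ⊗ₖ M)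
      - (K + M) ⊗ₖ (K + M)).PosSemidef := by
  rw [kronecker_stiffness_mul_inv_mul_sub_eq M K ((isUnit_iff_isUnit_det M).mp hM.isUnit)]
  have hKMK := hK.isHermitian.posSemidef_mul_inv_mul_self hM
  have hM' := hM.posSemidef
  exact ((((hKMK.kronecker hM').add (hM'.kronecker hKMK)).add (hK.kronecker hK)).add
    (hK.kronecker hM')).add (hM'.kronecker hK)
end

section
/- Let M be an SPD n×n real matrix, let K and C be symmetric positive semidefinite n×n real matrices, let h > 0 and c > 0, and assume K + M ≼ c·(h⁻²·M + C). Then K⊗M + M⊗K + M⊗M ≼ 2c·( h⁻²·(M⊗M) + C⊗M + M⊗C ). -/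
open Matrix Kronecker

/-- Each summand on the right is a Kronecker product of positive semidefinite factors as soon as
the one-dimensional gap `c (a M + C) - (K + M)` is; this is how the one-dimensional inequality
lifts to two dimensions. -/
theorem smul_smoother_sub_stiffness_eq {m R : Type*} [CommRing R]
    (M K C : Matrix m m R) (a c : R) :
    (2 * c) • (a • (M ⊗ₖ M) + C ⊗ₖ M + M ⊗ₖ C) - (K ⊗ₖ M + M ⊗ₖ K + M ⊗ₖ M)
      = (c • (a • M + C) - (K + M)) ⊗ₖ M + M ⊗ₖ (c • (a • M + C) - (K + M))
        + c • (C ⊗ₖ M + M ⊗ₖ C) + M ⊗ₖ M := by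
  ext ⟨i, j⟩ ⟨k, l⟩
  simp only [Matrix.sub_apply, Matrix.add_apply, Matrix.smul_apply,
    kroneckerMap_apply, smul_eq_mul]
  ring

theorem stmt15_general {n : ℕ} (M K C : Matrix (Fin n) (Fin n) ℝ)
    (hM : M.PosDef) (hC : C.PosSemidef)
    (h c : ℝ) (hc : 0 < c)
    (hKM : (c • ((h ^ 2)⁻¹ • M + C) - (K + M)).PosSemidef) :
    ((2 * c) • ((h ^ 2)⁻¹ • (M ⊗ₖ M) + C ⊗ₖ M + M ⊗ₖ C)
      - (K ⊗ₖ M + M ⊗ₖ K + M ⊗ₖ M)).PosSemidef := by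
  rw [smul_smoother_sub_stiffness_eq]
  have hM' := hM.posSemidef
  exact (((hKM.kronecker hM').add (hM'.kronecker hKM)).add
    (((hC.kronecker hM').add (hM'.kronecker hC)).smul hc.le)).add (hM'.kronecker hM')

/-- robust inverse inequality for the two-dimensional smoother.
If `K + M ≼ c (h⁻² M + C)`, then
`K⊗M + M⊗K + M⊗M ≼ 2c (h⁻² (M⊗M) + C⊗M + M⊗C)`. -/
theorem stmt15 {n : ℕ} (M K C : Matrix (Fin n) (Fin n) ℝ)
    (hM : M.PosDef) (hK : K.PosSemidef) (hC : C.PosSemidef)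
    (h c : ℝ) (hh : 0 < h) (hc : 0 < c)
    (hKM : (c • ((h ^ 2)⁻¹ • M + C) - (K + M)).PosSemidef) :
    ((2 * c) • ((h ^ 2)⁻¹ • (M ⊗ₖ M) + C ⊗ₖ M + M ⊗ₖ C)
      - (K ⊗ₖ M + M ⊗ₖ K + M ⊗ₖ M)).PosSemidef :=
  stmt15_general M K C hM hC h c hc hKM
end

section
/- Let M and K be symmetric positive semidefinite n×n real matrices, let C be a symmetric n×n real matrix with C ≼ K + M, and let 0 < h ≤ 1. Then h⁻²·(M⊗M) + C⊗M + M⊗C ≼ 2·h⁻²·(M⊗M) + K⊗M + M⊗K + M⊗M. -/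
open Matrix Kronecker
open scoped ComplexOrder

theorem Matrix.PosSemidef.kronecker_add_kronecker {𝕜 m : Type*} [RCLike 𝕜] [Fintype m]
    {D M : Matrix m m 𝕜} (hD : D.PosSemidef) (hM : M.PosSemidef) :
    (D ⊗ₖ M + M ⊗ₖ D).PosSemidef :=
  (hD.kronecker hM).add (hM.kronecker hD)

theorem kronecker_smoother_gap_eq {R m : Type*} [CommRing R] (M K C : Matrix m m R) (c : R) :
    (2 * c) • (M ⊗ₖ M) + (K ⊗ₖ M + M ⊗ₖ K + M ⊗ₖ M) - (c • (M ⊗ₖ M) + C ⊗ₖ M + M ⊗ₖ C)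
      = (c - 1) • (M ⊗ₖ M) + ((K + M - C) ⊗ₖ M + M ⊗ₖ (K + M - C)) := by
  ext ⟨i₁, i₂⟩ ⟨j₁, j₂⟩
  simp only [kroneckerMap_apply, Matrix.add_apply, Matrix.sub_apply, Matrix.smul_apply,
    smul_eq_mul]
  ring

theorem stmt16_general {n : ℕ} (M K C : Matrix (Fin n) (Fin n) ℝ)
    (hM : M.PosSemidef)
    (hC : (K + M - C).PosSemidef)
    (h : ℝ) (hh0 : 0 < h) (hh1 : h ≤ 1) :
    (((2 * (h ^ 2)⁻¹) • (M ⊗ₖ M) + (K ⊗ₖ M + M ⊗ₖ K + M ⊗ₖ M))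
      - ((h ^ 2)⁻¹ • (M ⊗ₖ M) + C ⊗ₖ M + M ⊗ₖ C)).PosSemidef := by
  rw [kronecker_smoother_gap_eq]
  have hinv : 1 ≤ (h ^ 2)⁻¹ := one_le_inv₀ (by positivity) |>.mpr (pow_le_one₀ hh0.le hh1)
  exact ((hM.kronecker hM).smul (sub_nonneg.mpr hinv)).add (hC.kronecker_add_kronecker hM)

/-- key step of the approximation property of the two-dimensional
smoother. If `C ≼ K + M` and `0 < h ≤ 1`, then
`h⁻² (M⊗M) + C⊗M + M⊗C ≼ 2h⁻² (M⊗M) + K⊗M + M⊗K + M⊗M`. -/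
theorem stmt16 {n : ℕ} (M K C : Matrix (Fin n) (Fin n) ℝ)
    (hM : M.PosSemidef) (hK : K.PosSemidef) (hCsymm : C.IsSymm)
    (hC : (K + M - C).PosSemidef)
    (h : ℝ) (hh0 : 0 < h) (hh1 : h ≤ 1) :
    (((2 * (h ^ 2)⁻¹) • (M ⊗ₖ M) + (K ⊗ₖ M + M ⊗ₖ K + M ⊗ₖ M))
      - ((h ^ 2)⁻¹ • (M ⊗ₖ M) + C ⊗ₖ M + M ⊗ₖ C)).PosSemidef :=
  stmt16_general M K C hM hC h hh0 hh1
end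

section
/- For every integer p ≥ 1 and every integer n > p, there exists a nonzero spline w ∈ S_{p,n} with |w|_{H¹(0,1)} ≥ p·n·‖w‖_{L²(0,1)}. In particular, the inverse inequality |u|_{H¹} ≤ c·n·‖u‖_{L²} cannot hold on the full spline space S_{p,n} with a constant c independent of the spline degree p. -/
open MeasureTheory

/-! The witness is the truncated power `w x = max (x - c) 0 ^ p` with knot `c = 1 - 1/n`, which
lives on the last cell only. With `h = 1/n` its norms are explicit,
`‖w‖² = h^(2p+1) / (2p+1)` and `|w|²_{H¹} = p² h^(2p-1) / (2p-1)`, so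
`|w|²_{H¹} = p² n² (2p+1)/(2p-1) ‖w‖² ≥ p² n² ‖w‖²`. -/

open Set Filter Topology

theorem intervalIntegral_eq_of_eq_zero_of_lt {f g : ℝ → ℝ} {a b c : ℝ} (hac : a ≤ c) (hcb : c ≤ b)
    (hf : ∀ x < c, f x = 0) (hfg : ∀ x, c < x → f x = g x) :
    ∫ x in a..b, f x = ∫ x in c..b, g x := by
  have hae : ∀ᵐ x, f x = (Ioi c).indicator g x := by
    filter_upwards [volume.ae_ne c] with x hx
    rcases hx.lt_or_gt with hlt | hgt
    · rw [hf x hlt, indicator_of_notMem (show x ∉ Ioi c from not_lt.2 hlt.le)]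
    · rw [hfg x hgt, indicator_of_mem (show x ∈ Ioi c from hgt)]
  calc ∫ x in a..b, f x = ∫ x in a..b, (Ioi c).indicator g x :=
        intervalIntegral.integral_congr_ae (hae.mono fun x hx _ => hx)
    _ = ∫ x in Ioc a b ∩ Ioi c, g x := by
        rw [intervalIntegral.integral_of_le (hac.trans hcb),
          setIntegral_indicator measurableSet_Ioi]
    _ = ∫ x in c..b, g x := by
        rw [Ioc_inter_Ioi, max_eq_right hac, intervalIntegral.integral_of_le hcb]

theorem integral_sub_pow (c b : ℝ) (k : ℕ) :
    ∫ x in c..b, (x - c) ^ k = (b - c) ^ (k + 1) / (k + 1) := by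
  simp [intervalIntegral.integral_comp_sub_right (· ^ k), integral_pow]

noncomputable def truncatedPower (c : ℝ) (k : ℕ) (x : ℝ) : ℝ := max (x - c) 0 ^ k

section truncatedPower

variable {c : ℝ} {k : ℕ}

theorem truncatedPower_of_le (hk : k ≠ 0) {x : ℝ} (hx : x ≤ c) : truncatedPower c k x = 0 := by
  simp [truncatedPower, max_eq_right (sub_nonpos.2 hx), zero_pow hk]

theorem truncatedPower_of_ge {x : ℝ} (hx : c ≤ x) : truncatedPower c k x = (x - c) ^ k := by
  simp [truncatedPower, max_eq_left (sub_nonneg.2 hx)]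

theorem continuous_truncatedPower : Continuous (truncatedPower c k) := by
  unfold truncatedPower; fun_prop

theorem truncatedPower_succ (hk : k ≠ 0) (x : ℝ) :
    truncatedPower c (k + 1) x = (x - c) * truncatedPower c k x := by
  rcases le_total x c with hx | hx
  · simp [truncatedPower_of_le hk hx, truncatedPower_of_le k.succ_ne_zero hx]
  · rw [truncatedPower_of_ge hx, truncatedPower_of_ge hx, pow_succ']

theorem hasDerivAt_truncatedPower_of_lt (hk : k ≠ 0) {x : ℝ} (hx : x < c) :
    HasDerivAt (truncatedPower c k) 0 x := by
  have : truncatedPower c k =ᶠ[𝓝 x] fun _ => 0 := by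
    filter_upwards [Iio_mem_nhds hx] with y hy using truncatedPower_of_le hk (le_of_lt hy)
  exact (hasDerivAt_const x 0).congr_of_eventuallyEq this

theorem hasDerivAt_truncatedPower_of_gt {x : ℝ} (hx : c < x) :
    HasDerivAt (truncatedPower c (k + 1)) ((k + 1) * (x - c) ^ k) x := by
  have : truncatedPower c (k + 1) =ᶠ[𝓝 x] fun y => (y - c) ^ (k + 1) := by
    filter_upwards [Ioi_mem_nhds hx] with y hy using truncatedPower_of_ge (le_of_lt hy)
  refine HasDerivAt.congr_of_eventuallyEq ?_ this
  simpa [Function.comp_def] using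
    (hasDerivAt_pow (k + 1) (x - c)).comp x ((hasDerivAt_id x).sub_const c)

theorem hasDerivAt_truncatedPower (hk : k ≠ 0) (x : ℝ) :
    HasDerivAt (truncatedPower c (k + 1)) ((k + 1) * truncatedPower c k x) x := by
  rcases lt_trichotomy x c with hx | rfl | hx
  · rw [truncatedPower_of_le hk hx.le, mul_zero]
    exact hasDerivAt_truncatedPower_of_lt k.succ_ne_zero hx
  · -- At the knot the slope of `(· - x) * truncatedPower x k` is `truncatedPower x k`, which is
    -- continuous and vanishes at `x`.
    rw [truncatedPower_of_le hk le_rfl, mul_zero, hasDerivAt_iff_tendsto_slope]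
    have hslope : truncatedPower x k =ᶠ[𝓝[≠] x] slope (truncatedPower x (k + 1)) x := by
      filter_upwards [self_mem_nhdsWithin] with y hy
      rw [slope_def_field, truncatedPower_succ hk, truncatedPower_of_le k.succ_ne_zero le_rfl,
        sub_zero, mul_div_cancel_left₀ _ (sub_ne_zero.2 hy)]
    have hcont := (continuous_truncatedPower (c := x) (k := k)).tendsto x
    rw [truncatedPower_of_le hk le_rfl] at hcont
    exact (hcont.mono_left nhdsWithin_le_nhds).congr' hslope
  · rw [truncatedPower_of_ge hx.le]; exact hasDerivAt_truncatedPower_of_gt hx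

end truncatedPower

theorem contDiff_truncatedPower (c : ℝ) : ∀ k : ℕ, ContDiff ℝ k (truncatedPower c (k + 1))
  | 0 => contDiff_zero.2 continuous_truncatedPower
  | k + 1 => by
      have hderiv : deriv (truncatedPower c (k + 2)) =
          fun x => (k + 1 + 1) * truncatedPower c (k + 1) x :=
        funext fun x =>
          (hasDerivAt_truncatedPower k.succ_ne_zero x).deriv.trans (by push_cast; ring)
      rw [Nat.cast_succ, contDiff_succ_iff_deriv]
      refine ⟨fun x => (hasDerivAt_truncatedPower k.succ_ne_zero x).differentiableAt, by simp, ?_⟩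
      rw [hderiv]
      exact contDiff_const.mul (contDiff_truncatedPower c k)

theorem isSpline_truncatedPower (n j k : ℕ) :
    IsSpline (k + 1) n (truncatedPower (j / n) (k + 1)) := by
  refine ⟨by simpa using (contDiff_truncatedPower _ k).contDiffOn, fun i _ _ => ?_⟩
  rcases le_or_gt i j with hij | hji
  · refine ⟨0, by simp, fun x hx => ?_⟩
    rw [truncatedPower_of_le k.succ_ne_zero (hx.2.trans (by gcongr)), Polynomial.eval_zero]
  · refine ⟨(Polynomial.X - Polynomial.C ((j : ℝ) / n)) ^ (k + 1), by simp, fun x hx => ?_⟩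
    have hji' : (j : ℝ) ≤ i - 1 := by
      rw [le_sub_iff_add_le]; exact_mod_cast hji
    rw [truncatedPower_of_ge ((by gcongr : (j : ℝ) / n ≤ (i - 1) / n).trans hx.1)]
    simp

theorem L2sq_truncatedPower {c : ℝ} {k : ℕ} (hk : k ≠ 0) (hc₀ : 0 ≤ c) (hc₁ : c ≤ 1) :
    L2sq (truncatedPower c k) = (1 - c) ^ (2 * k + 1) / (2 * k + 1) := by
  rw [L2sq, intervalIntegral_eq_of_eq_zero_of_lt hc₀ hc₁ (g := fun x => (x - c) ^ (2 * k)),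
    integral_sub_pow]
  · push_cast; rfl
  · intro x hx; simp [truncatedPower_of_le hk hx.le]
  · intro x hx; rw [truncatedPower_of_ge hx.le, ← pow_mul, mul_comm]

theorem H1semisq_truncatedPower {c : ℝ} {k : ℕ} (hc₀ : 0 ≤ c) (hc₁ : c ≤ 1) :
    H1semisq (truncatedPower c (k + 1)) = (k + 1) ^ 2 * ((1 - c) ^ (2 * k + 1) / (2 * k + 1)) := by
  rw [H1semisq, intervalIntegral_eq_of_eq_zero_of_lt hc₀ hc₁
    (g := fun x => (k + 1) ^ 2 * (x - c) ^ (2 * k)), intervalIntegral.integral_const_mul,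
    integral_sub_pow]
  · push_cast; rfl
  · intro x hx; simp [(hasDerivAt_truncatedPower_of_lt k.succ_ne_zero hx).deriv]
  · intro x hx; rw [(hasDerivAt_truncatedPower_of_gt hx).deriv]; ring

theorem sq_mul_L2sq_le_H1semisq_truncatedPower {c : ℝ} (k : ℕ) (hc₀ : 0 ≤ c) (hc₁ : c < 1) :
    ((k + 1) / (1 - c)) ^ 2 * L2sq (truncatedPower c (k + 1)) ≤
      H1semisq (truncatedPower c (k + 1)) := by
  rw [L2sq_truncatedPower k.succ_ne_zero hc₀ hc₁.le, H1semisq_truncatedPower hc₀ hc₁.le]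
  have hh : 0 < 1 - c := sub_pos.2 hc₁
  calc ((k + 1) / (1 - c)) ^ 2 * ((1 - c) ^ (2 * (k + 1) + 1) / (2 * ((k + 1 : ℕ) : ℝ) + 1))
      = (k + 1) ^ 2 * ((1 - c) ^ (2 * k + 1) / (2 * k + 3)) := by
        field_simp; push_cast; ring
    _ ≤ (k + 1) ^ 2 * ((1 - c) ^ (2 * k + 1) / (2 * k + 1)) := by
        gcongr; linarith

/-- the inverse inequality fails on the full spline space: for all
`n > p ≥ 1` there is a nonzero spline `w ∈ S_{p,n}` with
`|w|_{H¹(0,1)} ≥ p · n · ‖w‖_{L²(0,1)}`. -/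
theorem stmt18 (p n : ℕ) (hp : 1 ≤ p) (hn : p < n) :
    ∃ w : ℝ → ℝ, IsSpline p n w ∧ (∃ x ∈ Set.Icc (0:ℝ) 1, w x ≠ 0) ∧
      (p : ℝ) * (n : ℝ) * Real.sqrt (L2sq w) ≤ Real.sqrt (H1semisq w) := by
  obtain ⟨k, rfl⟩ : ∃ k, p = k + 1 := ⟨p - 1, by omega⟩
  have hn₀ : (0 : ℝ) < n := by exact_mod_cast (by omega : 0 < n)
  have h1c : 1 - ((n - 1 : ℕ) : ℝ) / n = 1 / n := by
    rw [Nat.cast_sub (by omega)]; field_simp; ring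
  set c : ℝ := ((n - 1 : ℕ) : ℝ) / n
  have hc₀ : 0 ≤ c := by positivity
  have hc₁ : c < 1 := by linarith [(by positivity : (0 : ℝ) < 1 / n)]
  refine ⟨truncatedPower c (k + 1), isSpline_truncatedPower n (n - 1) k,
    ⟨1, right_mem_Icc.2 zero_le_one, ?_⟩, ?_⟩
  · rw [truncatedPower_of_ge hc₁.le, h1c]; positivity
  have hnorms := sq_mul_L2sq_le_H1semisq_truncatedPower k hc₀ hc₁
  rw [h1c, div_div_eq_mul_div, div_one] at hnorms
  calc ((k + 1 : ℕ) : ℝ) * n * √(L2sq (truncatedPower c (k + 1)))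
      = √(((k + 1) * n) ^ 2 * L2sq (truncatedPower c (k + 1))) := by
        rw [Real.sqrt_mul (sq_nonneg _), Real.sqrt_sq (by positivity)]
        push_cast; ring
    _ ≤ √(H1semisq (truncatedPower c (k + 1))) := Real.sqrt_le_sqrt hnorms
end

section
/- Let A and L be SPD n×n real matrices, let P be an n×m matrix with full column rank, set A_c := PᵀAP and T := P·A_c⁻¹·Pᵀ·A, let τ ∈ ℝ, set S := I − τ·L⁻¹·A, let k ∈ ℕ, and let c ≥ 0 be such that ‖(I−T)·S^{2k}·v‖_L ≤ c·‖v‖_L for all v ∈ ℝⁿ. Then ‖Sᵏ·(I−T)·Sᵏ·u‖_A ≤ c·‖u‖_A for all u ∈ ℝⁿ. (The operator Sᵏ(I−T)Sᵏ is self-adjoint with respect to the A-inner product, so its A-operator norm equals the spectral radius of (I−T)S^{2k}, which is bounded by the L-operator norm of (I−T)S^{2k}.) -/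
/-!
`S` and the `A`-orthogonal projection `T` are self-adjoint for the `A`-inner product, hence so is
`E = Sᵏ (I - T) Sᵏ`, and the `A`-operator norm of an `A`-self-adjoint matrix is the largest modulus
of its eigenvalues. A nonzero eigenvalue of `E = Sᵏ ((I - T) Sᵏ)` is also an eigenvalue of the
swapped product `(I - T) S^{2k}`, and every eigenvalue of that matrix is bounded by its
`L`-operator norm, which is at most `c`.
-/

open Matrix

theorem LinearMap.IsSymmetric.norm_apply_le_of_hasEigenvalue {𝕜 E : Type*} [RCLike 𝕜]
    [NormedAddCommGroup E] [InnerProductSpace 𝕜 E] [FiniteDimensional 𝕜 E]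
    {T : E →ₗ[𝕜] E} (hT : T.IsSymmetric) {c : ℝ} (hc : 0 ≤ c)
    (h : ∀ μ, Module.End.HasEigenvalue T μ → ‖μ‖ ≤ c) (x : E) :
    ‖T x‖ ≤ c * ‖x‖ := by
  let b := hT.eigenvectorBasis rfl
  rw [← b.repr.norm_map, ← b.repr.norm_map x, EuclideanSpace.norm_eq, EuclideanSpace.norm_eq,
    ← Real.sqrt_sq hc, ← Real.sqrt_mul (sq_nonneg c), Finset.mul_sum]
  gcongr with i
  rw [hT.eigenvectorBasis_apply_self_apply, norm_mul, mul_pow]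
  gcongr
  exact h _ (hT.hasEigenvalue_eigenvalues rfl i)

namespace Matrix

namespace IsSelfAdjoint

variable {ι R : Type*} [Fintype ι] [CommRing R] {J X Y : Matrix ι ι R}

theorem one [DecidableEq ι] : J.IsSelfAdjoint 1 := by
  simp [Matrix.IsSelfAdjoint, Matrix.IsAdjointPair]

theorem sub (hX : J.IsSelfAdjoint X) (hY : J.IsSelfAdjoint Y) : J.IsSelfAdjoint (X - Y) := by
  simp_all [Matrix.IsSelfAdjoint, Matrix.IsAdjointPair, sub_mul, mul_sub]

theorem smul (hX : J.IsSelfAdjoint X) (r : R) : J.IsSelfAdjoint (r • X) := by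
  simp_all [Matrix.IsSelfAdjoint, Matrix.IsAdjointPair]

theorem conjugate (hX : J.IsSelfAdjoint X) (hY : J.IsSelfAdjoint Y) :
    J.IsSelfAdjoint (X * Y * X) := by
  unfold Matrix.IsSelfAdjoint Matrix.IsAdjointPair at *
  simp only [transpose_mul, Matrix.mul_assoc, hX]
  simp only [← Matrix.mul_assoc, hX, hY]

theorem pow [DecidableEq ι] (hX : J.IsSelfAdjoint X) (k : ℕ) : J.IsSelfAdjoint (X ^ k) := by
  unfold Matrix.IsSelfAdjoint Matrix.IsAdjointPair at *
  rw [transpose_pow]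
  exact (SemiconjBy.pow_right hX.symm k).symm

end IsSelfAdjoint

theorem isSelfAdjoint_inv_mul {ι : Type*} [Fintype ι] [DecidableEq ι] {A L : Matrix ι ι ℝ}
    (hA : A.IsSymm) (hL : L.IsSymm) : A.IsSelfAdjoint (L⁻¹ * A) := by
  unfold Matrix.IsSelfAdjoint Matrix.IsAdjointPair
  rw [transpose_mul, transpose_nonsing_inv, hA.eq, hL.eq, Matrix.mul_assoc]

theorem isSelfAdjoint_mul_inv_mul {ι κ : Type*} [Fintype ι] [Fintype κ] [DecidableEq κ]
    {A : Matrix ι ι ℝ} (hA : A.IsSymm) (P : Matrix ι κ ℝ) :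
    A.IsSelfAdjoint (P * (Pᵀ * A * P)⁻¹ * (Pᵀ * A)) := by
  unfold Matrix.IsSelfAdjoint Matrix.IsAdjointPair
  simp only [transpose_mul, transpose_nonsing_inv, transpose_transpose, hA.eq, Matrix.mul_assoc]

section SwappedProduct

variable {m n R : Type*} [Fintype m] [Fintype n] [CommRing R]
  {X : Matrix m n R} {Y : Matrix n m R} {μ : R} {v : m → R}

theorem mul_mulVec_mulVec_eq_smul_of_mul_mulVec_eq_smul (h : (X * Y) *ᵥ v = μ • v) :
    (Y * X) *ᵥ (Y *ᵥ v) = μ • (Y *ᵥ v) := by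
  rw [← mulVec_mulVec, mulVec_mulVec v X Y, h, mulVec_smul]

theorem mulVec_ne_zero_of_mul_mulVec_eq_smul [NoZeroDivisors R]
    (h : (X * Y) *ᵥ v = μ • v) (hμ : μ ≠ 0) (hv : v ≠ 0) : Y *ᵥ v ≠ 0 := fun h0 => by
  rw [← mulVec_mulVec, h0, mulVec_zero, eq_comm, smul_eq_zero] at h
  exact h.elim hμ hv

end SwappedProduct

end Matrix

theorem matNorm_transpose_mul_self {n : ℕ} (R : Matrix (Fin n) (Fin n) ℝ) (v : Fin n → ℝ) :
    matNorm (Rᵀ * R) v = ‖WithLp.toLp 2 (R *ᵥ v)‖ := by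
  rw [matNorm, EuclideanSpace.norm_eq, ← mulVec_mulVec, dotProduct_mulVec, vecMul_transpose]
  simp [dotProduct, sq]

theorem matNorm_smul {n : ℕ} (Q : Matrix (Fin n) (Fin n) ℝ) (a : ℝ) (v : Fin n → ℝ) :
    matNorm Q (a • v) = |a| * matNorm Q v := by
  rw [matNorm, matNorm, mulVec_smul, smul_dotProduct, dotProduct_smul, smul_eq_mul, smul_eq_mul,
    ← mul_assoc, Real.sqrt_mul (mul_self_nonneg a), Real.sqrt_mul_self_eq_abs]

theorem matNorm_pos {n : ℕ} {Q : Matrix (Fin n) (Fin n) ℝ} (hQ : Q.PosDef) {v : Fin n → ℝ}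
    (hv : v ≠ 0) : 0 < matNorm Q v :=
  Real.sqrt_pos.mpr (by simpa using hQ.dotProduct_mulVec_pos hv)

theorem abs_le_of_mulVec_eq_smul {n : ℕ} {Q B : Matrix (Fin n) (Fin n) ℝ} (hQ : Q.PosDef) {c : ℝ}
    (hB : ∀ v, matNorm Q (B *ᵥ v) ≤ c * matNorm Q v) {μ : ℝ} {v : Fin n → ℝ} (hv : v ≠ 0)
    (hBv : B *ᵥ v = μ • v) : |μ| ≤ c := by
  have := hB v
  rw [hBv, matNorm_smul] at this
  exact le_of_mul_le_mul_right this (matNorm_pos hQ hv)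

theorem matNorm_mulVec_le_of_isSelfAdjoint {n : ℕ} {A E : Matrix (Fin n) (Fin n) ℝ}
    (hA : A.PosDef) (hE : A.IsSelfAdjoint E) {c : ℝ} (hc : 0 ≤ c)
    (h : ∀ (μ : ℝ) (v : Fin n → ℝ), v ≠ 0 → E *ᵥ v = μ • v → |μ| ≤ c) (u : Fin n → ℝ) :
    matNorm A (E *ᵥ u) ≤ c * matNorm A u := by
  -- With `A = Rᵀ R`, `v ↦ R v` is an isometry from the `A`-norm to the Euclidean norm, and it
  -- turns `E` into the symmetric matrix `R E R⁻¹`.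
  open scoped MatrixOrder in
  obtain ⟨R, hR, rfl⟩ :=
    CStarAlgebra.isStrictlyPositive_iff_eq_star_mul_self.mp hA.isStrictlyPositive
  rw [star_eq_conjTranspose, conjTranspose_eq_transpose_of_trivial] at hE ⊢
  set N := R * E * R⁻¹
  have hN : N.IsHermitian := by
    have := (isAdjointPair_equiv 1 E E R hR).mp (by rwa [Matrix.mul_one])
    rw [Matrix.IsAdjointPair, Matrix.mul_one, Matrix.one_mul] at this
    exact isHermitian_iff_isSymm.mpr this
  have hRinv : IsUnit R.det := (isUnit_iff_isUnit_det R).mp hR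
  have hNR : N * R = R * E := by simp [N, Matrix.mul_assoc, nonsing_inv_mul R hRinv]
  rw [matNorm_transpose_mul_self, matNorm_transpose_mul_self]
  have hRE : WithLp.toLp 2 (R *ᵥ E *ᵥ u) = N.toEuclideanLin (WithLp.toLp 2 (R *ᵥ u)) := by
    simp [mulVec_mulVec, hNR]
  rw [hRE]
  refine (isSymmetric_toEuclideanLin_iff.mpr hN).norm_apply_le_of_hasEigenvalue hc
    (fun μ hμ => ?_) _
  obtain ⟨w, hw⟩ := hμ.exists_hasEigenvector
  have hNw : N *ᵥ w.ofLp = μ • w.ofLp := by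
    simpa using congrArg WithLp.ofLp (Module.End.mem_eigenspace_iff.mp hw.1)
  have hEN : E * R⁻¹ = R⁻¹ * N := by
    simp [N, ← Matrix.mul_assoc, nonsing_inv_mul R hRinv]
  have hEv : E *ᵥ (R⁻¹ *ᵥ w.ofLp) = μ • (R⁻¹ *ᵥ w.ofLp) := by
    rw [mulVec_mulVec, hEN, ← mulVec_mulVec, hNw, mulVec_smul]
  have hv : R⁻¹ *ᵥ w.ofLp ≠ 0 := fun h0 => hw.2 <| by
    simpa [mulVec_mulVec, mul_nonsing_inv R hRinv] using congrArg (R *ᵥ ·) h0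
  simpa using h μ _ hv hEv

theorem stmt19_general {n m : ℕ} (A L : Matrix (Fin n) (Fin n) ℝ)
    (hA : A.PosDef) (hL : L.PosDef)
    (P : Matrix (Fin n) (Fin m) ℝ)
    (T : Matrix (Fin n) (Fin n) ℝ) (hT : T = P * (Pᵀ * A * P)⁻¹ * (Pᵀ * A))
    (τ : ℝ)
    (S : Matrix (Fin n) (Fin n) ℝ) (hS : S = 1 - τ • (L⁻¹ * A))
    (k : ℕ) (c : ℝ) (hc : 0 ≤ c)
    (hbound : ∀ v : Fin n → ℝ,
        matNorm L (((1 - T) * S ^ (2 * k)) *ᵥ v) ≤ c * matNorm L v) :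
    ∀ u : Fin n → ℝ,
      matNorm A ((S ^ k * (1 - T) * S ^ k) *ᵥ u) ≤ c * matNorm A u := by
  have hAsymm : A.IsSymm := isHermitian_iff_isSymm.mp hA.isHermitian
  have hSadj : A.IsSelfAdjoint S :=
    hS ▸ Matrix.IsSelfAdjoint.one.sub ((isSelfAdjoint_inv_mul hAsymm
      (isHermitian_iff_isSymm.mp hL.isHermitian)).smul τ)
  have hTadj : A.IsSelfAdjoint (1 - T) :=
    hT ▸ Matrix.IsSelfAdjoint.one.sub (isSelfAdjoint_mul_inv_mul hAsymm P)
  have hB : (1 - T) * S ^ (2 * k) = (1 - T) * S ^ k * S ^ k := by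
    rw [two_mul, pow_add, Matrix.mul_assoc]
  intro u
  refine matNorm_mulVec_le_of_isSelfAdjoint hA ((hSadj.pow k).conjugate hTadj) hc
    (fun μ v hv hEv => ?_) u
  rcases eq_or_ne μ 0 with rfl | hμ
  · simpa using hc
  rw [Matrix.mul_assoc] at hEv
  exact abs_le_of_mulVec_eq_smul hL (hB ▸ hbound)
    (mulVec_ne_zero_of_mul_mulVec_eq_smul hEv hμ hv)
    (mul_mulVec_mulVec_eq_smul_of_mul_mulVec_eq_smul hEv)

/-- with `A`, `L` SPD, `P` of full column rank, `A_c = PᵀAP`,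
`T = P A_c⁻¹ Pᵀ A`, `S = I − τ L⁻¹ A`, and `‖(I−T) S^{2k} v‖_L ≤ c ‖v‖_L` for
all `v`, one has `‖Sᵏ (I−T) Sᵏ u‖_A ≤ c ‖u‖_A` for all `u`. -/
theorem stmt19 {n m : ℕ} (A L : Matrix (Fin n) (Fin n) ℝ)
    (hA : A.PosDef) (hL : L.PosDef)
    (P : Matrix (Fin n) (Fin m) ℝ) (hP : P.rank = m)
    (T : Matrix (Fin n) (Fin n) ℝ) (hT : T = P * (Pᵀ * A * P)⁻¹ * (Pᵀ * A))
    (τ : ℝ)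
    (S : Matrix (Fin n) (Fin n) ℝ) (hS : S = 1 - τ • (L⁻¹ * A))
    (k : ℕ) (c : ℝ) (hc : 0 ≤ c)
    (hbound : ∀ v : Fin n → ℝ,
        matNorm L (((1 - T) * S ^ (2 * k)) *ᵥ v) ≤ c * matNorm L v) :
    ∀ u : Fin n → ℝ,
      matNorm A ((S ^ k * (1 - T) * S ^ k) *ᵥ u) ≤ c * matNorm A u :=
  stmt19_general A L hA hL P T hT τ S hS k c hc hbound
end
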